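/- arXiv:0911.1618 — 4 statements merged into one kernel-verified Lean document; each statement's English description precedes it below -/
import Mathlib

section
/- Let π, ρ be admissible irreducible representations of M⁰, G⁰ respectively, π*, ρ* their smooth contragredients, and δ ∈ G with det(δ) = −1. Assume: if dim W is odd, π* ≅ π ≅ π^δ and (ρ* ≅ ρ or ρ* ≅ ρ^δ); if dim W is even, ρ* ≅ ρ ≅ ρ^δ and (π* ≅ π or π* ≅ π^δ). Then dim Hom_{G⁰}(π|_{G⁰}, ρ*) = dim Hom_{G⁰}(π|_{G⁰}, ρ) = dim Hom_{G⁰}((π*)|_{G⁰}, ρ). -/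
open Matrix

noncomputable section
section GroupDefs

variable {F : Type} [Field F] {n : Type} [Fintype n] [DecidableEq n]

/-- The orthogonal group of the bilinear form with Gram matrix `B`:
invertible matrices `g` with `gᵀ * B * g = B`, i.e. `<gv, gw> = <v, w>`. -/
def OGrp (B : Matrix n n F) : Subgroup (GL n F) where
  carrier := {g | (g : Matrix n n F)ᵀ * B * g = B}
  one_mem' := by simp
  mul_mem' := by
    intro a b ha hb
    simp only [Set.mem_setOf_eq] at *
    set u := (a : Matrix n n F)
    set w := (b : Matrix n n F)
    have h : ((a * b : GL n F) : Matrix n n F) = u * w := rfl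
    rw [h]
    calc (u * w)ᵀ * B * (u * w) = wᵀ * (uᵀ * B * u) * w := by rw [transpose_mul]; noncomm_ring
      _ = B := by rw [ha]; exact hb
  inv_mem' := by
    intro a ha
    simp only [Set.mem_setOf_eq] at *
    set u := (a : Matrix n n F)
    set v := ((a⁻¹ : GL n F) : Matrix n n F)
    have h2 : u * v = 1 := a.mul_inv
    calc vᵀ * B * v = vᵀ * (uᵀ * B * u) * v := by rw [ha]
      _ = (u * v)ᵀ * B * (u * v) := by rw [transpose_mul]; noncomm_ring
      _ = B := by rw [h2]; simp

/-- The special orthogonal group of `B`: isometries of determinant `1`. -/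
def SOGrp (B : Matrix n n F) : Subgroup (GL n F) :=
  OGrp B ⊓ (Matrix.GeneralLinearGroup.det : GL n F →* Fˣ).ker

lemma SOGrp_conj_mem {B : Matrix n n F} {g x : GL n F}
    (hg : g ∈ OGrp B) (hx : x ∈ SOGrp B) (ε : ℤˣ) :
    g * x ^ (ε : ℤ) * g⁻¹ ∈ SOGrp B := by
  rw [SOGrp, Subgroup.mem_inf] at hx ⊢
  obtain ⟨hx1, hx2⟩ := hx
  have hxε1 : x ^ (ε : ℤ) ∈ OGrp B := Subgroup.zpow_mem _ hx1 _
  have hxε2 : x ^ (ε : ℤ) ∈ (Matrix.GeneralLinearGroup.det : GL n F →* Fˣ).ker :=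
    Subgroup.zpow_mem _ hx2 _
  refine ⟨(OGrp B).mul_mem ((OGrp B).mul_mem hg hxε1) ((OGrp B).inv_mem hg), ?_⟩
  rw [MonoidHom.mem_ker] at hxε2 ⊢
  rw [_root_.map_mul, _root_.map_mul, map_inv, hxε2, mul_one, mul_inv_cancel]

/-- The action of a pair `(g, ε)` (`g` in the orthogonal group, `ε = ±1`) on the special
orthogonal group: `x ↦ g xᵉ g⁻¹`. -/
def conjAct (B : Matrix n n F) (g : GL n F) (hg : g ∈ OGrp B) (ε : ℤˣ)
    (x : ↥(SOGrp B)) : ↥(SOGrp B) :=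
  ⟨g * (x : GL n F) ^ (ε : ℤ) * g⁻¹, SOGrp_conj_mem hg x.2 ε⟩

/-- The Lie algebra `𝔤` of the special orthogonal group of `B`:
matrices `X` with `Xᵀ * B + B * X = 0`, i.e. `<Xv, w> + <v, Xw> = 0`. -/
def lieAlg (B : Matrix n n F) : Submodule F (Matrix n n F) where
  carrier := {X | Xᵀ * B + B * X = 0}
  add_mem' := by
    intro a b ha hb
    simp only [Set.mem_setOf_eq] at *
    rw [transpose_add]
    linear_combination (norm := noncomm_ring) ha + hb
  zero_mem' := by simp
  smul_mem' := by
    intro t X hX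
    simp only [Set.mem_setOf_eq] at *
    rw [transpose_smul, smul_mul_assoc, mul_smul_comm, ← smul_add, hX, smul_zero]

lemma lieAlg_conj_mem {B : Matrix n n F} {g : GL n F}
    (hg : g ∈ OGrp B) (ε : ℤˣ) {X : Matrix n n F} (hX : X ∈ lieAlg B) :
    ((ε : ℤ) : F) • ((g : Matrix n n F) * X *
      ((g⁻¹ : GL n F) : Matrix n n F)) ∈ lieAlg B := by
  set u := (g : Matrix n n F) with hu
  set v := ((g⁻¹ : GL n F) : Matrix n n F) with hvv
  have h : uᵀ * B * u = B := hg
  have huv : u * v = 1 := g.mul_inv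
  have hBu : uᵀ * B = B * v := by
    calc uᵀ * B = uᵀ * B * (u * v) := by rw [huv, mul_one]
      _ = (uᵀ * B * u) * v := by noncomm_ring
      _ = B * v := by rw [h]
  have huB : B * u = vᵀ * B := by
    calc B * u = (u * v)ᵀ * B * u := by rw [huv]; simp
      _ = vᵀ * (uᵀ * B * u) := by rw [transpose_mul]; noncomm_ring
      _ = vᵀ * B := by rw [h]
  have hX' : Xᵀ * B = -(B * X) := by
    have h0 : Xᵀ * B + B * X = 0 := hX
    linear_combination (norm := noncomm_ring) h0
  have key : vᵀ * Xᵀ * uᵀ * B + B * (u * X * v) = 0 := by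
    calc vᵀ * Xᵀ * uᵀ * B + B * (u * X * v)
        = vᵀ * Xᵀ * (uᵀ * B) + (B * u) * X * v := by noncomm_ring
      _ = vᵀ * (Xᵀ * B) * v + vᵀ * B * X * v := by rw [hBu, huB]; noncomm_ring
      _ = vᵀ * (-(B * X)) * v + vᵀ * B * X * v := by rw [hX']
      _ = 0 := by noncomm_ring
  show (((ε : ℤ) : F) • (u * X * v))ᵀ * B + B * (((ε : ℤ) : F) • (u * X * v)) = 0
  have expand : (((ε : ℤ) : F) • (u * X * v))ᵀ * B + B * (((ε : ℤ) : F) • (u * X * v))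
      = ((ε : ℤ) : F) • (vᵀ * Xᵀ * uᵀ * B + B * (u * X * v)) := by
    rw [transpose_smul, transpose_mul, transpose_mul, smul_mul_assoc, mul_smul_comm, ← smul_add]
    congr 1
    noncomm_ring
  rw [expand, key, smul_zero]

/-- The action of a pair `(g, ε)` on the Lie algebra `𝔤`: `X ↦ ε g X g⁻¹`. -/
def lieAct (B : Matrix n n F) (g : GL n F) (hg : g ∈ OGrp B) (ε : ℤˣ)
    (X : ↥(lieAlg B)) : ↥(lieAlg B) :=
  ⟨((ε : ℤ) : F) • ((g : Matrix n n F) * (X : Matrix n n F) *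
      ((g⁻¹ : GL n F) : Matrix n n F)), lieAlg_conj_mem hg ε X.2⟩

/-- The action of a pair `(g, ε)` on `V`: `v ↦ ε g v`. -/
def vecAct (g : GL n F) (ε : ℤˣ) (v : n → F) : n → F :=
  ((ε : ℤ) : F) • (g : Matrix n n F).mulVec v

end GroupDefs
section ConjHom

variable {F : Type} [Field F] {n : Type} [Fintype n] [DecidableEq n]

lemma SOGrp_conj_mem' {B : Matrix n n F} {g x : GL n F}
    (hg : g ∈ OGrp B) (hx : x ∈ SOGrp B) : g * x * g⁻¹ ∈ SOGrp B := by
  have h := SOGrp_conj_mem hg hx 1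
  simpa using h

/-- Conjugation `x ↦ δ x δ⁻¹` by an element `δ` of the orthogonal group, as an
automorphism of the special orthogonal group. -/
def conjSOHom (B : Matrix n n F) (δ : GL n F) (hδ : δ ∈ OGrp B) :
    ↥(SOGrp B) →* ↥(SOGrp B) where
  toFun x := ⟨δ * (x : GL n F) * δ⁻¹, SOGrp_conj_mem' hδ x.2⟩
  map_one' := by
    apply Subtype.ext
    simp
  map_mul' x y := by
    apply Subtype.ext
    show δ * ((x : GL n F) * (y : GL n F)) * δ⁻¹ = (δ * x * δ⁻¹) * (δ * y * δ⁻¹)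
    group

end ConjHom
section WSetup

variable {F : Type} [Field F]

variable {dV : ℕ}

/-- The Gram matrix of `W = V ⊕ U` (orthogonal direct sum), where `V` has Gram matrix `BV`
and the line `U` has a basis vector of square-norm `c`. -/
def BWmat (BV : Matrix (Fin dV) (Fin dV) F) (c : F) :
    Matrix (Fin dV ⊕ Fin 1) (Fin dV ⊕ Fin 1) F :=
  Matrix.fromBlocks BV 0 0 (Matrix.diagonal fun _ => c)

/-- The multiplicative embedding `A ↦ A ⊕ 1` of endomorphisms of `V` into endomorphisms
of `W = V ⊕ U`, acting trivially on `U`. -/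
def embMat : Matrix (Fin dV) (Fin dV) F →* Matrix (Fin dV ⊕ Fin 1) (Fin dV ⊕ Fin 1) F where
  toFun A := Matrix.fromBlocks A 0 0 1
  map_one' := Matrix.fromBlocks_one
  map_mul' A B := by
    rw [Matrix.fromBlocks_multiply]
    simp

/-- The embedding `GL(V) → GL(W)`, `g ↦ g ⊕ 1`. -/
def embGL : GL (Fin dV) F →* GL (Fin dV ⊕ Fin 1) F := Units.map embMat

lemma embGL_coe (g : GL (Fin dV) F) :
    ((embGL g : GL (Fin dV ⊕ Fin 1) F) : Matrix (Fin dV ⊕ Fin 1) (Fin dV ⊕ Fin 1) F)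
      = Matrix.fromBlocks (g : Matrix (Fin dV) (Fin dV) F) 0 0 1 := rfl

/-- `G` embeds into `M` (the subgroup fixing `U` pointwise). -/
lemma embGL_og {BV : Matrix (Fin dV) (Fin dV) F} {c : F} {g : GL (Fin dV) F}
    (hg : g ∈ OGrp BV) : embGL g ∈ OGrp (BWmat BV c) := by
  have h : (g : Matrix (Fin dV) (Fin dV) F)ᵀ * BV * g = BV := hg
  show _ = _
  rw [embGL_coe, BWmat, Matrix.fromBlocks_transpose, Matrix.fromBlocks_multiply,
    Matrix.fromBlocks_multiply]
  simp [h]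

lemma embGL_det (g : GL (Fin dV) F) :
    Matrix.det ((embGL g : GL (Fin dV ⊕ Fin 1) F) : Matrix (Fin dV ⊕ Fin 1) (Fin dV ⊕ Fin 1) F)
      = Matrix.det (g : Matrix (Fin dV) (Fin dV) F) := by
  rw [embGL_coe, Matrix.det_fromBlocks_zero₂₁]
  simp

/-- `G⁰` embeds into `M⁰`. -/
lemma embGL_so {BV : Matrix (Fin dV) (Fin dV) F} {c : F} {g : GL (Fin dV) F}
    (hg : g ∈ SOGrp BV) : embGL g ∈ SOGrp (BWmat BV c) := by
  rw [SOGrp, Subgroup.mem_inf] at hg ⊢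
  refine ⟨embGL_og hg.1, ?_⟩
  have h2 := hg.2
  rw [MonoidHom.mem_ker] at h2 ⊢
  apply Units.ext
  have hval : ((Matrix.GeneralLinearGroup.det (embGL g : GL (Fin dV ⊕ Fin 1) F)) : F)
      = Matrix.det ((embGL g : GL (Fin dV ⊕ Fin 1) F) : Matrix (Fin dV ⊕ Fin 1) (Fin dV ⊕ Fin 1) F) := rfl
  rw [hval, embGL_det]
  have : ((Matrix.GeneralLinearGroup.det g : Fˣ) : F) = Matrix.det (g : Matrix (Fin dV) (Fin dV) F) := rfl
  rw [← this, h2, Units.val_one]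

/-- The embedding `SO(V) →* SO(W)` of special orthogonal groups given by `g ↦ g ⊕ 1`. -/
def ιSO (BV : Matrix (Fin dV) (Fin dV) F) (c : F) : ↥(SOGrp BV) →* ↥(SOGrp (BWmat BV c)) :=
  MonoidHom.codRestrict ((embGL (F := F) (dV := dV)).comp (SOGrp BV).subtype) _
    (fun x => embGL_so x.2)

end WSetup
section Representations

variable {G : Type*} [Group G] {E : Type*} [AddCommGroup E] [Module ℂ E]
  {E₁ : Type*} [AddCommGroup E₁] [Module ℂ E₁] {E₂ : Type*} [AddCommGroup E₂] [Module ℂ E₂]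

/-- The stabilizer of a vector `v` under a representation `π`. -/
def repStab (π : Representation ℂ G E) (v : E) : Subgroup G where
  carrier := {g | π g v = v}
  one_mem' := by simp
  mul_mem' := by
    intro a b ha hb
    simp only [Set.mem_setOf_eq] at *
    rw [_root_.map_mul, Module.End.mul_apply, hb, ha]
  inv_mem' := by
    intro a ha
    simp only [Set.mem_setOf_eq] at *
    conv_lhs => rw [← ha]
    rw [← Module.End.mul_apply, ← _root_.map_mul, inv_mul_cancel, _root_.map_one, Module.End.one_apply]

/-- A representation is smooth if every vector has open stabilizer. -/
def IsSmoothRep [TopologicalSpace G] (π : Representation ℂ G E) : Prop :=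
  ∀ v : E, IsOpen ((repStab π v : Subgroup G) : Set G)

/-- The subspace `E^K` of `K`-fixed vectors. -/
def fixedVecs (π : Representation ℂ G E) (K : Subgroup G) : Submodule ℂ E where
  carrier := {v | ∀ k ∈ K, π k v = v}
  add_mem' := by
    intro a b ha hb k hk
    rw [_root_.map_add, ha k hk, hb k hk]
  zero_mem' := by
    intro k hk
    rw [_root_.map_zero]
  smul_mem' := by
    intro c v hv k hk
    rw [_root_.map_smul, hv k hk]

/-- A representation is admissible if it is smooth and, for every compact open subgroup `K`,
the space of `K`-fixed vectors is finite-dimensional. -/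
def IsAdmissibleRep [TopologicalSpace G] (π : Representation ℂ G E) : Prop :=
  IsSmoothRep π ∧ ∀ K : Subgroup G, IsCompact (K : Set G) → IsOpen (K : Set G) →
    FiniteDimensional ℂ ↥(fixedVecs π K)

/-- A representation is irreducible if the space is nonzero and has no invariant subspaces
other than `0` and the whole space. -/
def IsIrreducibleRep (π : Representation ℂ G E) : Prop :=
  Nontrivial E ∧ ∀ q : Submodule ℂ E, (∀ (g : G), ∀ v ∈ q, π g v ∈ q) → q = ⊥ ∨ q = ⊤

/-- The space of `G`-equivariant linear maps between (the spaces of) two representations. -/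
def equivHom (π : Representation ℂ G E₁) (ρ : Representation ℂ G E₂) :
    Submodule ℂ (E₁ →ₗ[ℂ] E₂) where
  carrier := {A | ∀ (g : G) (v : E₁), A (π g v) = ρ g (A v)}
  add_mem' := by
    intro A B hA hB g v
    simp only [LinearMap.add_apply, _root_.map_add]
    rw [hA g v, hB g v]
  zero_mem' := by
    intro g v
    simp
  smul_mem' := by
    intro c A hA g v
    simp only [LinearMap.smul_apply]
    rw [hA g v, _root_.map_smul]

/-- The subspace of smooth vectors of a representation. -/
def smoothVecs [TopologicalSpace G] [ContinuousMul G] (π : Representation ℂ G E) :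
    Submodule ℂ E where
  carrier := {v | IsOpen ((repStab π v : Subgroup G) : Set G)}
  zero_mem' := by
    show IsOpen _
    have h : ((repStab π (0 : E) : Subgroup G) : Set G) = Set.univ := by
      ext g
      simp only [SetLike.mem_coe, Set.mem_univ, iff_true]
      show π g 0 = 0
      simp
    rw [h]
    exact isOpen_univ
  add_mem' := by
    intro a b ha hb
    refine Subgroup.isOpen_mono (H₁ := repStab π a ⊓ repStab π b) ?_ ?_
    · intro g hg
      rw [Subgroup.mem_inf] at hg
      show π g (a + b) = a + b
      rw [_root_.map_add, show π g a = a from hg.1, show π g b = b from hg.2]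
    · rw [Subgroup.coe_inf]
      exact IsOpen.inter ha hb
  smul_mem' := by
    intro c v hv
    refine Subgroup.isOpen_mono (H₁ := repStab π v) ?_ hv
    intro g hg
    show π g (c • v) = c • v
    rw [_root_.map_smul, show π g v = v from hg]

lemma dual_smooth_mem [TopologicalSpace G] [IsTopologicalGroup G] (π : Representation ℂ G E)
    (g : G) {l : Module.Dual ℂ E} (hl : l ∈ smoothVecs π.dual) :
    π.dual g l ∈ smoothVecs π.dual := by
  have e1 : ∀ (a b : G) (m : Module.Dual ℂ E), π.dual (a * b) m = π.dual a (π.dual b m) := by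
    intro a b m
    rw [_root_.map_mul, Module.End.mul_apply]
  have hset : ((repStab π.dual (π.dual g l) : Subgroup G) : Set G)
      = (fun h => g⁻¹ * h * g) ⁻¹' ((repStab π.dual l : Subgroup G) : Set G) := by
    ext h
    simp only [Set.mem_preimage, SetLike.mem_coe]
    constructor
    · intro hh
      have hh' : π.dual h (π.dual g l) = π.dual g l := hh
      show π.dual (g⁻¹ * h * g) l = l
      rw [e1, e1, hh', ← e1, inv_mul_cancel, _root_.map_one, Module.End.one_apply]
    · intro hh
      have hh' : π.dual (g⁻¹ * h * g) l = l := hh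
      show π.dual h (π.dual g l) = π.dual g l
      calc π.dual h (π.dual g l) = π.dual (h * g) l := (e1 h g l).symm
        _ = π.dual (g * (g⁻¹ * h * g)) l := by group
        _ = π.dual g (π.dual (g⁻¹ * h * g) l) := e1 _ _ _
        _ = π.dual g l := by rw [hh']
  show IsOpen _
  rw [hset]
  exact IsOpen.preimage ((continuous_const.mul continuous_id).mul continuous_const) hl

/-- The smooth contragredient `π*` of a representation `π`: the natural action on the
smooth vectors of the full linear dual, `(π*(x) λ)(v) = λ(π(x⁻¹) v)`. -/
def smoothDual [TopologicalSpace G] [IsTopologicalGroup G] (π : Representation ℂ G E) :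
    Representation ℂ G ↥(smoothVecs π.dual) where
  toFun g := (π.dual g).restrict (fun _ hx => dual_smooth_mem π g hx)
  map_one' := by
    refine LinearMap.ext fun v => Subtype.ext ?_
    rw [Module.End.one_apply, LinearMap.restrict_apply]
    show (π.dual 1) v.val = v.val
    rw [_root_.map_one, Module.End.one_apply]
  map_mul' g h := by
    refine LinearMap.ext fun v => Subtype.ext ?_
    rw [Module.End.mul_apply, LinearMap.restrict_apply, LinearMap.restrict_apply,
      LinearMap.restrict_apply]
    show (π.dual (g * h)) v.val = (π.dual g) ((π.dual h) v.val)
    rw [_root_.map_mul, Module.End.mul_apply]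

/-- Two representations are equivalent (isomorphic) if there is an equivariant linear
isomorphism between their spaces. -/
def RepEquivalent (π : Representation ℂ G E₁) (ρ : Representation ℂ G E₂) : Prop :=
  ∃ e : E₁ ≃ₗ[ℂ] E₂, ∀ (g : G) (v : E₁), e (π g v) = ρ g (e v)

end Representations

/-! Twisting both arguments of `Hom_{G⁰}` by the automorphism `x ↦ δ x δ⁻¹` of `G⁰` does not
change it, and the restriction of `π^δ` to `G⁰` is the `δ`-twist of `π|_{G⁰}`. Hence, once one
of `π`, `ρ` is isomorphic to its own `δ`-twist, a hypothesis `π* ≅ π^δ` or `ρ* ≅ ρ^δ` is as good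
as `π* ≅ π` or `ρ* ≅ ρ`, and the latter identify the Hom-spaces directly. -/

namespace RepEquivalent

variable {G G' : Type*} [Group G] [Group G']
  {E₁ E₂ : Type*} [AddCommGroup E₁] [Module ℂ E₁] [AddCommGroup E₂] [Module ℂ E₂]

protected lemma refl (σ : Representation ℂ G E₁) : RepEquivalent σ σ :=
  ⟨LinearEquiv.refl ℂ E₁, fun _ _ => rfl⟩

protected lemma symm {σ : Representation ℂ G E₁} {τ : Representation ℂ G E₂}
    (h : RepEquivalent σ τ) : RepEquivalent τ σ := by
  obtain ⟨e, he⟩ := h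
  exact ⟨e.symm, fun g w => e.injective <| by simp [he]⟩

protected lemma comp {σ : Representation ℂ G E₁} {τ : Representation ℂ G E₂}
    (h : RepEquivalent σ τ) (f : G' →* G) : RepEquivalent (σ.comp f) (τ.comp f) := by
  obtain ⟨e, he⟩ := h
  exact ⟨e, fun g v => he (f g) v⟩

end RepEquivalent

universe u

section EquivHom

variable {G G' : Type*} [Group G] [Group G']
  {E₁ E₂ E₃ E₄ : Type u} [AddCommGroup E₁] [Module ℂ E₁] [AddCommGroup E₂] [Module ℂ E₂]
  [AddCommGroup E₃] [Module ℂ E₃] [AddCommGroup E₄] [Module ℂ E₄]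

lemma mem_equivHom_iff {σ : Representation ℂ G E₁} {τ : Representation ℂ G E₂}
    {A : E₁ →ₗ[ℂ] E₂} : A ∈ equivHom σ τ ↔ ∀ (g : G) (v : E₁), A (σ g v) = τ g (A v) :=
  Iff.rfl

lemma equivHom_comp_of_surjective {c : G' →* G} (hc : Function.Surjective c)
    (σ : Representation ℂ G E₁) (τ : Representation ℂ G E₂) :
    equivHom (σ.comp c) (τ.comp c) = equivHom σ τ := by
  ext A
  simp only [mem_equivHom_iff, MonoidHom.coe_comp, Function.comp_apply]
  exact ⟨fun hA g v => by obtain ⟨g', rfl⟩ := hc g; exact hA g' v, fun hA g' v => hA (c g') v⟩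

lemma equivHom_map_arrowCongr {σ₁ : Representation ℂ G E₁} {σ₂ : Representation ℂ G E₂}
    {τ₁ : Representation ℂ G E₃} {τ₂ : Representation ℂ G E₄}
    {e₁ : E₁ ≃ₗ[ℂ] E₂} {e₂ : E₃ ≃ₗ[ℂ] E₄}
    (he₁ : ∀ g v, e₁ (σ₁ g v) = σ₂ g (e₁ v)) (he₂ : ∀ g v, e₂ (τ₁ g v) = τ₂ g (e₂ v)) :
    (equivHom σ₁ τ₁).map (e₁.arrowCongr e₂ (σ₁₁' := .id ℂ) (σ₂₂' := .id ℂ)).toLinearMap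
      = equivHom σ₂ τ₂ := by
  ext B
  rw [Submodule.mem_map_equiv, mem_equivHom_iff, mem_equivHom_iff]
  simp only [LinearEquiv.arrowCongr_symm_apply, he₁, LinearEquiv.symm_apply_eq, he₂,
    LinearEquiv.apply_symm_apply]
  exact forall_congr' fun g =>
    e₁.toEquiv.forall_congr_right (q := fun v => B (σ₂ g v) = τ₂ g (B v))

lemma rank_equivHom_congr {σ₁ : Representation ℂ G E₁} {σ₂ : Representation ℂ G E₂}
    {τ₁ : Representation ℂ G E₃} {τ₂ : Representation ℂ G E₄}
    (hσ : RepEquivalent σ₁ σ₂) (hτ : RepEquivalent τ₁ τ₂) :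
    Module.rank ℂ (equivHom σ₁ τ₁) = Module.rank ℂ (equivHom σ₂ τ₂) := by
  obtain ⟨e₁, he₁⟩ := hσ
  obtain ⟨e₂, he₂⟩ := hτ
  exact (LinearEquiv.ofSubmodules _ _ _ (equivHom_map_arrowCongr he₁ he₂)).rank_eq

lemma rank_equivHom_comp_left {c : G →* G} (hc : Function.Surjective c)
    (σ : Representation ℂ G E₁) {τ : Representation ℂ G E₂} (hτ : RepEquivalent (τ.comp c) τ) :
    Module.rank ℂ (equivHom (σ.comp c) τ) = Module.rank ℂ (equivHom σ τ) := by
  rw [rank_equivHom_congr (.refl _) hτ.symm, equivHom_comp_of_surjective hc]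

lemma rank_equivHom_comp_right {c : G →* G} (hc : Function.Surjective c)
    {σ : Representation ℂ G E₁} (hσ : RepEquivalent (σ.comp c) σ) (τ : Representation ℂ G E₂) :
    Module.rank ℂ (equivHom σ (τ.comp c)) = Module.rank ℂ (equivHom σ τ) := by
  rw [rank_equivHom_congr hσ.symm (.refl _), equivHom_comp_of_surjective hc]

end EquivHom

lemma conjSOHom_surjective {F : Type} [Field F] {n : Type} [Fintype n] [DecidableEq n]
    (B : Matrix n n F) {δ : GL n F} (hδ : δ ∈ OGrp B) :
    Function.Surjective (conjSOHom B δ hδ) := fun y =>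
  ⟨conjSOHom B δ⁻¹ ((OGrp B).inv_mem hδ) y, Subtype.ext <| by
    show δ * (δ⁻¹ * (y : GL n F) * δ⁻¹⁻¹) * δ⁻¹ = y
    group⟩

lemma conjSOHom_comp_ιSO {F : Type} [Field F] {dV : ℕ} (BV : Matrix (Fin dV) (Fin dV) F) (c : F)
    {δ : GL (Fin dV) F} (hδ : δ ∈ OGrp BV) :
    (conjSOHom (BWmat BV c) (embGL δ) (embGL_og hδ)).comp (ιSO BV c)
      = (ιSO BV c).comp (conjSOHom BV δ hδ) :=
  MonoidHom.ext fun x => Subtype.ext <| by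
    show embGL δ * embGL (x : GL (Fin dV) F) * (embGL δ)⁻¹
      = embGL (δ * (x : GL (Fin dV) F) * δ⁻¹)
    rw [map_mul, map_mul, map_inv]

theorem equivHom_dual_rank_eq_general (F : Type) [Field F] [TopologicalSpace F]
    [IsTopologicalRing F]
    (dV : ℕ) (BV : Matrix (Fin dV) (Fin dV) F) (c : F)
    (Eπ : Type) [AddCommGroup Eπ] [Module ℂ Eπ]
    (Eρ : Type) [AddCommGroup Eρ] [Module ℂ Eρ]
    (π : Representation ℂ ↥(SOGrp (BWmat BV c)) Eπ)
    (ρ : Representation ℂ ↥(SOGrp BV) Eρ)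
    (δ : GL (Fin dV) F) (hδ : δ ∈ OGrp BV)
    (hWodd : Odd (dV + 1) →
      RepEquivalent (smoothDual π) π ∧
      RepEquivalent (π.comp (conjSOHom (BWmat BV c) (embGL δ) (embGL_og hδ))) π ∧
      (RepEquivalent (smoothDual ρ) ρ ∨
        RepEquivalent (smoothDual ρ) (ρ.comp (conjSOHom BV δ hδ))))
    (hWeven : Even (dV + 1) →
      RepEquivalent (smoothDual ρ) ρ ∧
      RepEquivalent (ρ.comp (conjSOHom BV δ hδ)) ρ ∧
      (RepEquivalent (smoothDual π) π ∨
        RepEquivalent (smoothDual π)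
          (π.comp (conjSOHom (BWmat BV c) (embGL δ) (embGL_og hδ))))) :
    Module.rank ℂ ↥(equivHom (π.comp (ιSO BV c)) (smoothDual ρ))
      = Module.rank ℂ ↥(equivHom (π.comp (ιSO BV c)) ρ)
    ∧ Module.rank ℂ ↥(equivHom (π.comp (ιSO BV c)) ρ)
      = Module.rank ℂ ↥(equivHom ((smoothDual π).comp (ιSO BV c)) ρ) := by
  have hsurj := conjSOHom_surjective BV hδ
  have hrestrict : (π.comp (conjSOHom (BWmat BV c) (embGL δ) (embGL_og hδ))).comp (ιSO BV c)
      = (π.comp (ιSO BV c)).comp (conjSOHom BV δ hδ) := by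
    rw [MonoidHom.comp_assoc, conjSOHom_comp_ιSO, MonoidHom.comp_assoc]
  rcases Nat.even_or_odd (dV + 1) with hev | hodd
  · obtain ⟨hρdual, hρδ, hπdual | hπdual⟩ := hWeven hev
    · exact ⟨rank_equivHom_congr (.refl _) hρdual,
        (rank_equivHom_congr (hπdual.comp _) (.refl _)).symm⟩
    · refine ⟨rank_equivHom_congr (.refl _) hρdual, ?_⟩
      rw [rank_equivHom_congr (hπdual.comp _) (.refl ρ), hrestrict,
        rank_equivHom_comp_left hsurj _ hρδ]
  · obtain ⟨hπdual, hπδ, hρdual | hρdual⟩ := hWodd hodd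
    · exact ⟨rank_equivHom_congr (.refl _) hρdual,
        (rank_equivHom_congr (hπdual.comp _) (.refl _)).symm⟩
    · have hπδ' : RepEquivalent ((π.comp (ιSO BV c)).comp (conjSOHom BV δ hδ))
          (π.comp (ιSO BV c)) := hrestrict ▸ hπδ.comp (ιSO BV c)
      exact ⟨(rank_equivHom_congr (.refl _) hρdual).trans (rank_equivHom_comp_right hsurj hπδ' ρ),
        (rank_equivHom_congr (hπdual.comp _) (.refl _)).symm⟩

/-- Let `W = V ⊕ U` as above, `π`, `ρ` admissible irreducible representations of
`M⁰ = SO(W)`, `G⁰ = SO(V)`, with smooth contragredients `π*`, `ρ*`, and let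
`δ ∈ G = O(V)` with `det δ = −1`.  Assume: if `dim W` is odd then `π* ≅ π ≅ π^δ` and
(`ρ* ≅ ρ` or `ρ* ≅ ρ^δ`); if `dim W` is even then `ρ* ≅ ρ ≅ ρ^δ` and (`π* ≅ π` or
`π* ≅ π^δ`).  Then
`dim Hom_{G⁰}(π|, ρ*) = dim Hom_{G⁰}(π|, ρ) = dim Hom_{G⁰}(π*|, ρ)`. -/
theorem equivHom_dual_rank_eq (p : ℕ) [Fact p.Prime] (F : Type) [Field F] [TopologicalSpace F]
    [IsTopologicalRing F] [Algebra ℚ_[p] F] [FiniteDimensional ℚ_[p] F]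
    [ContinuousSMul ℚ_[p] F] [T2Space F]
    (dV : ℕ) (BV : Matrix (Fin dV) (Fin dV) F) (hBVsym : BVᵀ = BV)
    (hBVnondeg : IsUnit BV.det) (c : F) (hc : c ≠ 0)
    (Eπ : Type) [AddCommGroup Eπ] [Module ℂ Eπ]
    (Eρ : Type) [AddCommGroup Eρ] [Module ℂ Eρ]
    (π : Representation ℂ ↥(SOGrp (BWmat BV c)) Eπ)
    (ρ : Representation ℂ ↥(SOGrp BV) Eρ)
    (hπadm : IsAdmissibleRep π) (hπirr : IsIrreducibleRep π)
    (hρadm : IsAdmissibleRep ρ) (hρirr : IsIrreducibleRep ρ)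
    (δ : GL (Fin dV) F) (hδ : δ ∈ OGrp BV)
    (hδdet : (δ : Matrix (Fin dV) (Fin dV) F).det = -1)
    (hWodd : Odd (dV + 1) →
      RepEquivalent (smoothDual π) π ∧
      RepEquivalent (π.comp (conjSOHom (BWmat BV c) (embGL δ) (embGL_og hδ))) π ∧
      (RepEquivalent (smoothDual ρ) ρ ∨
        RepEquivalent (smoothDual ρ) (ρ.comp (conjSOHom BV δ hδ))))
    (hWeven : Even (dV + 1) →
      RepEquivalent (smoothDual ρ) ρ ∧
      RepEquivalent (ρ.comp (conjSOHom BV δ hδ)) ρ ∧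
      (RepEquivalent (smoothDual π) π ∨
        RepEquivalent (smoothDual π)
          (π.comp (conjSOHom (BWmat BV c) (embGL δ) (embGL_og hδ))))) :
    Module.rank ℂ ↥(equivHom (π.comp (ιSO BV c)) (smoothDual ρ))
      = Module.rank ℂ ↥(equivHom (π.comp (ιSO BV c)) ρ)
    ∧ Module.rank ℂ ↥(equivHom (π.comp (ιSO BV c)) ρ)
      = Module.rank ℂ ↥(equivHom ((smoothDual π).comp (ιSO BV c)) ρ) :=
  equivHom_dual_rank_eq_general F dV BV c Eπ Eρ π ρ δ hδ hWodd hWeven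
end
end

section
/- Fix a nonzero vector e ∈ U and let M̄_e be the stabilizer of e in M̄ for the action (m,ε)·w = ε m w. Then a distribution T ∈ S'(M⁰) satisfies (m,ε)·T = ε·T for all (m,ε) ∈ M̄_e if and only if it satisfies (g,ε)·T = ε·T for all (g,ε) ∈ Ḡ; that is, S'(M⁰)^{M̄_e,χ} = S'(M⁰)^{Ḡ,χ}. -/
open Matrix MeasureTheory

noncomputable section

/-- The space `S(X)` of locally constant, compactly supported `ℂ`-valued functions on a
topological space `X`. -/
def SchwartzSp (X : Type*) [TopologicalSpace X] : Submodule ℂ (X → ℂ) where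
  carrier := {f | IsLocallyConstant f ∧ HasCompactSupport f}
  add_mem' := by
    rintro f g ⟨hf1, hf2⟩ ⟨hg1, hg2⟩
    exact ⟨hf1.add hg1, hf2.add hg2⟩
  zero_mem' := by
    refine ⟨?_, ?_⟩
    · exact IsLocallyConstant.const 0
    · exact HasCompactSupport.zero
  smul_mem' := by
    intro c f hf
    show IsLocallyConstant (c • f) ∧ HasCompactSupport (c • f)
    exact ⟨hf.1.comp (c • ·), hf.2.smul_left⟩

/-- Distributions on `X`: the space `S'(X)`, the full linear dual of `S(X)`. -/
abbrev Distrn (X : Type*) [TopologicalSpace X] : Type _ := Module.Dual ℂ ↥(SchwartzSp X)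

/-- The distribution `T` transforms by the scalar `c` under the map `σ : X → X`:
`T(f ∘ σ) = c * T(f)` for every `f ∈ S(X)`.  (If `σ` is the action of a group element `h⁻¹`,
this says `(h · T) = c • T` for the usual dual actions `(h·f)(x) = f(h⁻¹·x)`,
`(h·T)(f) = T(h⁻¹·f)`.) -/
def TransformsBy {X : Type*} [TopologicalSpace X] (T : Distrn X) (σ : X → X) (c : ℂ) : Prop :=
  ∀ f g : ↥(SchwartzSp X), (∀ x, (g : X → ℂ) x = (f : X → ℂ) (σ x)) → T g = c * T f

/-- The support of the distribution `T` is contained in the closed set `C`: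
`T` annihilates every `f ∈ S(X)` vanishing on `C` (such an `f`, being locally constant,
is supported in the open complement of `C`). -/
def SuppIn {X : Type*} [TopologicalSpace X] (T : Distrn X) (C : Set X) : Prop :=
  ∀ f : ↥(SchwartzSp X), (∀ x ∈ C, (f : X → ℂ) x = 0) → T f = 0
/-! If an isometry `m` of `W` satisfies `m e = ε e`, it preserves the line `U` and hence
`V = U^⊥`, so `m = ε (g ⊕ 1)` with `g` an isometry of `V`; conversely every such `m` fixes `e`
under the twisted action `(m, ε)·w = ε m w`. The central scalar `ε` does not change the
conjugation action on `M⁰`, and the determinant conditions match because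
`e(W) ≡ e(V) + dim W (mod 2)`. Hence `(g, ε) ↦ (ε (g ⊕ 1), ε)` is a bijection `Ḡ → M̄_e`
compatible with the actions on `M⁰` and with `χ`. -/

section ScalarSigns

variable {F : Type} [Field F] {n : Type} [Fintype n] [DecidableEq n]

lemma intCast_units_mul_self (ε : ℤˣ) : ((ε : ℤ) : F) * ((ε : ℤ) : F) = 1 := by
  rw [← Int.cast_mul, ← Units.val_mul, Int.units_mul_self, Units.val_one, Int.cast_one]

lemma coe_units_smul_eq_intCast_smul (ε : ℤˣ) (m : GL n F) :
    ((ε • m : GL n F) : Matrix n n F) = ((ε : ℤ) : F) • (m : Matrix n n F) := by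
  rw [Units.val_smul, Units.smul_def, Int.cast_smul_eq_zsmul]

lemma units_smul_mem_OGrp {B : Matrix n n F} {m : GL n F} (hm : m ∈ OGrp B) (ε : ℤˣ) :
    ε • m ∈ OGrp B := by
  show ((ε • m : GL n F) : Matrix n n F)ᵀ * B * ((ε • m : GL n F) : Matrix n n F) = B
  simp only [coe_units_smul_eq_intCast_smul, transpose_smul, smul_mul_assoc, mul_smul_comm,
    smul_smul, intCast_units_mul_self, one_smul]
  exact hm

lemma conjAct_units_smul (B : Matrix n n F) {m : GL n F} (hm : m ∈ OGrp B) (ε : ℤˣ)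
    (hεm : ε • m ∈ OGrp B) (δ : ℤˣ) :
    conjAct B (ε • m) hεm δ = conjAct B m hm δ := by
  funext x
  apply Subtype.ext
  show ε • m * (x : GL n F) ^ (δ : ℤ) * (ε • m)⁻¹ = m * (x : GL n F) ^ (δ : ℤ) * m⁻¹
  rw [Units.smul_inv]
  ext1
  simp only [Units.val_mul, Units.val_smul, smul_mul_assoc, mul_smul_comm, smul_smul,
    inv_mul_cancel, one_smul]

lemma det_units_smul (ε : ℤˣ) (m : GL n F) :
    ((ε • m : GL n F) : Matrix n n F).det
      = ((ε : ℤ) : F) ^ Fintype.card n * (m : Matrix n n F).det := by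
  rw [coe_units_smul_eq_intCast_smul, det_smul]

lemma vecAct_units_smul_self (ε : ℤˣ) (m : GL n F) (v : n → F) :
    vecAct (ε • m) ε v = (m : Matrix n n F) *ᵥ v := by
  rw [vecAct, coe_units_smul_eq_intCast_smul, smul_mulVec, smul_smul, intCast_units_mul_self,
    one_smul]

lemma vecAct_eq_self_iff (m : GL n F) (ε : ℤˣ) (v : n → F) :
    vecAct m ε v = v ↔ (m : Matrix n n F) *ᵥ v = ((ε : ℤ) : F) • v := by
  rw [vecAct]
  constructor <;> intro h
  · calc (m : Matrix n n F) *ᵥ v = ((ε : ℤ) : F) • ((ε : ℤ) : F) • (m : Matrix n n F) *ᵥ v := by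
          rw [smul_smul, intCast_units_mul_self, one_smul]
      _ = ((ε : ℤ) : F) • v := by rw [h]
  · rw [h, smul_smul, intCast_units_mul_self, one_smul]

lemma intCast_units_pow_eq_pow_of_mod_two_eq (ε : ℤˣ) {a b : ℕ} (h : a % 2 = b % 2) :
    ((ε : ℤ) : F) ^ a = ((ε : ℤ) : F) ^ b := by
  rcases Int.units_eq_one_or ε with rfl | rfl
  · simp
  · simp only [Units.val_neg, Units.val_one, Int.cast_neg, Int.cast_one]
    rw [neg_one_pow_eq_pow_mod_two, h, ← neg_one_pow_eq_pow_mod_two]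

end ScalarSigns

section Stabilizer

variable {F : Type} [Field F] {dV : ℕ}

lemma embGL_mulVec_inr (g : GL (Fin dV) F) (t : F) :
    (embGL g : Matrix (Fin dV ⊕ Fin 1) (Fin dV ⊕ Fin 1) F) *ᵥ
      Sum.elim (fun _ => (0 : F)) (fun _ => t) = Sum.elim (fun _ => (0 : F)) (fun _ => t) := by
  rw [embGL_coe, fromBlocks_mulVec]
  ext (i | i) <;> simp [mulVec, dotProduct]

lemma det_units_smul_embGL_eq_iff (ε : ℤˣ) (g : GL (Fin dV) F) :
    ((ε • embGL g : GL (Fin dV ⊕ Fin 1) F) : Matrix (Fin dV ⊕ Fin 1) (Fin dV ⊕ Fin 1) F).det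
        = ((ε : ℤ) : F) ^ ((dV + 1 + 1) / 2)
      ↔ (g : Matrix (Fin dV) (Fin dV) F).det = ((ε : ℤ) : F) ^ ((dV + 1) / 2) := by
  have hcard : Fintype.card (Fin dV ⊕ Fin 1) = dV + 1 := by simp
  have hsign : ((ε : ℤ) : F) ^ ((dV + 1 + 1) / 2)
      = ((ε : ℤ) : F) ^ (dV + 1) * ((ε : ℤ) : F) ^ ((dV + 1) / 2) := by
    rw [← pow_add]
    apply intCast_units_pow_eq_pow_of_mod_two_eq
    rcases Nat.even_or_odd dV with ⟨k, rfl⟩ | ⟨k, rfl⟩ <;> omega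
  have hne : ((ε : ℤ) : F) ^ (dV + 1) ≠ 0 :=
    pow_ne_zero _ (left_ne_zero_of_mul_eq_one (intCast_units_mul_self ε))
  rw [det_units_smul, embGL_det, hcard, hsign, mul_right_inj' hne]

lemma vecAct_units_smul_embGL (ε : ℤˣ) (g : GL (Fin dV) F) (t : F) :
    vecAct (ε • embGL g) ε (Sum.elim (fun _ => (0 : F)) (fun _ => t))
      = Sum.elim (fun _ => (0 : F)) (fun _ => t) := by
  rw [vecAct_units_smul_self, embGL_mulVec_inr]

lemma toBlocks_of_mulVec_inr_eq_smul {k : Type} [Fintype k]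
    {A : Matrix (k ⊕ Fin 1) (k ⊕ Fin 1) F} {t s : F} (ht : t ≠ 0)
    (h : A *ᵥ Sum.elim (fun _ => (0 : F)) (fun _ => t)
      = s • Sum.elim (fun _ => (0 : F)) (fun _ => t)) :
    A.toBlocks₁₂ = 0 ∧ A.toBlocks₂₂ = s • 1 := by
  have hcol : ∀ i, A i (Sum.inr 0) * t
      = (s • Sum.elim (fun _ => (0 : F)) (fun _ => t)) i := by
    intro i
    rw [← h]
    simp [mulVec, dotProduct, Fintype.sum_sum_type]
  constructor
  · ext i j
    rw [Subsingleton.elim j 0]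
    simpa [toBlocks₁₂, ht] using hcol (Sum.inl i)
  · ext i j
    rw [Subsingleton.elim i 0, Subsingleton.elim j 0]
    simpa [toBlocks₂₂, ht] using hcol (Sum.inr 0)

lemma eq_zero_and_isometry_of_fromBlocks_isometry_BWmat {BV : Matrix (Fin dV) (Fin dV) F}
    {c s : F} (hc : c ≠ 0) (hs : s ≠ 0) {P : Matrix (Fin dV) (Fin dV) F}
    {Q : Matrix (Fin 1) (Fin dV) F}
    (h : (fromBlocks P 0 Q (s • 1))ᵀ * BWmat BV c * fromBlocks P 0 Q (s • 1) = BWmat BV c) :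
    Q = 0 ∧ Pᵀ * BV * P = BV := by
  rw [BWmat, fromBlocks_transpose, fromBlocks_multiply, fromBlocks_multiply] at h
  have h₂₁ := congrArg toBlocks₂₁ h
  have h₁₁ := congrArg toBlocks₁₁ h
  simp only [toBlocks_fromBlocks₂₁, toBlocks_fromBlocks₁₁] at h₂₁ h₁₁
  have hQ : Q = 0 := by
    ext i j
    simpa [diagonal_mul, hc, hs] using congrFun (congrFun h₂₁ i) j
  subst hQ
  simpa using h₁₁

lemma exists_eq_units_smul_embGL_of_vecAct_eq {BV : Matrix (Fin dV) (Fin dV) F} {c t : F}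
    (hc : c ≠ 0) (ht : t ≠ 0) {m : GL (Fin dV ⊕ Fin 1) F} (hm : m ∈ OGrp (BWmat BV c))
    {ε : ℤˣ} (hstab : vecAct m ε (Sum.elim (fun _ => (0 : F)) (fun _ => t))
      = Sum.elim (fun _ => (0 : F)) (fun _ => t)) :
    ∃ g ∈ OGrp BV, m = ε • embGL g := by
  set A := (m : Matrix (Fin dV ⊕ Fin 1) (Fin dV ⊕ Fin 1) F)
  set s := ((ε : ℤ) : F)
  have hs : s * s = 1 := intCast_units_mul_self ε
  obtain ⟨h₁₂, h₂₂⟩ := toBlocks_of_mulVec_inr_eq_smul ht ((vecAct_eq_self_iff m ε _).1 hstab)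
  have hA : A = fromBlocks A.toBlocks₁₁ 0 A.toBlocks₂₁ (s • 1) := by
    rw [← h₁₂, ← h₂₂, fromBlocks_toBlocks]
  have hmA : Aᵀ * BWmat BV c * A = BWmat BV c := hm
  rw [hA] at hmA
  obtain ⟨h₂₁, hP⟩ :=
    eq_zero_and_isometry_of_fromBlocks_isometry_BWmat hc (left_ne_zero_of_mul_eq_one hs) hmA
  rw [h₂₁] at hA
  have hAunit : IsUnit A := m.isUnit
  rw [hA] at hAunit
  obtain ⟨u, hu⟩ := (isUnit_fromBlocks_zero₂₁.1 hAunit).1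
  have huO : u ∈ OGrp BV := by
    show (u : Matrix (Fin dV) (Fin dV) F)ᵀ * BV * u = BV
    rw [hu]
    exact hP
  refine ⟨ε • u, units_smul_mem_OGrp huO ε, Units.ext ?_⟩
  rw [coe_units_smul_eq_intCast_smul, embGL_coe, coe_units_smul_eq_intCast_smul, hu,
    fromBlocks_smul, smul_smul, hs, one_smul, smul_zero, smul_zero]
  exact hA

end Stabilizer

theorem MbarStab_chi_iff_Gbar_chi_general (F : Type) [Field F] [TopologicalSpace F]
    (dV : ℕ) (BV : Matrix (Fin dV) (Fin dV) F) (c : F) (hc : c ≠ 0)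
    (t : F) (ht : t ≠ 0) (w₀ : (Fin dV ⊕ Fin 1) → F)
    (hw₀ : w₀ = Sum.elim (fun _ => (0 : F)) (fun _ => t))
    (T : Distrn ↥(SOGrp (BWmat BV c))) :
    (∀ (m : GL (Fin dV ⊕ Fin 1) F) (hm : m ∈ OGrp (BWmat BV c)) (ε : ℤˣ),
      ((m : Matrix (Fin dV ⊕ Fin 1) (Fin dV ⊕ Fin 1) F).det
        = ((ε : ℤ) : F) ^ ((dV + 1 + 1) / 2)) →
      vecAct m ε w₀ = w₀ →
      TransformsBy T (conjAct (BWmat BV c) m hm ε) ((ε : ℤ) : ℂ))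
    ↔ (∀ (g : GL (Fin dV) F) (hg : g ∈ OGrp BV) (ε : ℤˣ),
      ((g : Matrix (Fin dV) (Fin dV) F).det = ((ε : ℤ) : F) ^ ((dV + 1) / 2)) →
      TransformsBy T (conjAct (BWmat BV c) (embGL g) (embGL_og hg) ε) ((ε : ℤ) : ℂ)) := by
  subst hw₀
  constructor
  · intro H g hg ε hdet
    rw [← conjAct_units_smul _ (embGL_og hg) ε (units_smul_mem_OGrp (embGL_og hg) ε)]
    exact H _ _ ε ((det_units_smul_embGL_eq_iff ε g).2 hdet) (vecAct_units_smul_embGL ε g t)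
  · intro H m hm ε hdet hstab
    obtain ⟨g, hg, rfl⟩ := exists_eq_units_smul_embGL_of_vecAct_eq hc ht hm hstab
    rw [conjAct_units_smul _ (embGL_og hg)]
    exact H g hg ε ((det_units_smul_embGL_eq_iff ε g).1 hdet)

/-- Let `W = V ⊕ U` as above and fix a nonzero vector `e = w₀ ∈ U`.  Let `M̄_e` be the
stabilizer of `w₀` in `M̄ = {(m,ε) : m ∈ O(W), det m = ε^{e(W)}}` for the action
`(m,ε)·w = ε m w`.  A distribution `T` on `M⁰ = SO(W)` transforms by `χ(m,ε) = ε`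
under `M̄_e` (acting by `(m,ε)·x = m xᵉ m⁻¹`) if and only if it transforms by `χ`
under `Ḡ = {(g,ε) : g ∈ O(V), det g = ε^{e(V)}}`: `S'(M⁰)^{M̄_e,χ} = S'(M⁰)^{Ḡ,χ}`. -/
theorem MbarStab_chi_iff_Gbar_chi (p : ℕ) [Fact p.Prime] (F : Type) [Field F] [TopologicalSpace F]
    [IsTopologicalRing F] [Algebra ℚ_[p] F] [FiniteDimensional ℚ_[p] F]
    [ContinuousSMul ℚ_[p] F] [T2Space F]
    (dV : ℕ) (BV : Matrix (Fin dV) (Fin dV) F) (hBVsym : BVᵀ = BV)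
    (hBVnondeg : IsUnit BV.det) (c : F) (hc : c ≠ 0)
    (t : F) (ht : t ≠ 0) (w₀ : (Fin dV ⊕ Fin 1) → F)
    (hw₀ : w₀ = Sum.elim (fun _ => (0 : F)) (fun _ => t))
    (T : Distrn ↥(SOGrp (BWmat BV c))) :
    (∀ (m : GL (Fin dV ⊕ Fin 1) F) (hm : m ∈ OGrp (BWmat BV c)) (ε : ℤˣ),
      ((m : Matrix (Fin dV ⊕ Fin 1) (Fin dV ⊕ Fin 1) F).det
        = ((ε : ℤ) : F) ^ ((dV + 1 + 1) / 2)) →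
      vecAct m ε w₀ = w₀ →
      TransformsBy T (conjAct (BWmat BV c) m hm ε) ((ε : ℤ) : ℂ))
    ↔ (∀ (g : GL (Fin dV) F) (hg : g ∈ OGrp BV) (ε : ℤˣ),
      ((g : Matrix (Fin dV) (Fin dV) F).det = ((ε : ℤ) : F) ^ ((dV + 1) / 2)) →
      TransformsBy T (conjAct (BWmat BV c) (embGL g) (embGL_og hg) ε) ((ε : ℤ) : ℂ)) :=
  MbarStab_chi_iff_Gbar_chi_general F dV BV c hc t ht w₀ hw₀ T
end
end

section
/- Let F^× act on F² by t·(x,y) := (tx, t^{-1}y), and let T₀ ∈ S'(F² ∖ {0}) be the distribution T₀(f) = ∫_{F^×} f(x,0) d^*x − ∫_{F^×} f(0,y) d^*y, where d^*x is a Haar measure on the multiplicative group F^×. Then there exists no F^×-invariant distribution T ∈ S'(F²) whose restriction to S(F² ∖ {0}) (embedded in S(F²) by extension by zero) equals T₀. -/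
open Matrix MeasureTheory

noncomputable section

/-! Take a compact open neighbourhood `U` of `0` and a unit `t` with `t U ⊊ U`, and let
`φ = 1_{U × U}`. Invariance gives `T (φ ∘ t - φ) = 0`. The difference vanishes near the origin,
so `T₀` must also give `0`; but on the `x`-axis it is the indicator of `t⁻¹ B` and on the `y`-axis
minus the indicator of `B`, for the shell `B = U ∖ t U`, so `T₀` gives `μ(t⁻¹ B) + μ(B) = 2 μ(B)`.
This is nonzero: `B` is a nonempty open subset of `F^×`, and it is compact there because it is
compact in `F`, avoids `0`, and inversion is continuous on `F ∖ {0}`. -/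

open Topology

namespace SchwartzSp

variable {X : Type*} [TopologicalSpace X]

theorem indicator_one_mem {U : Set X} (hc : IsCompact U) (hU : IsClopen U) :
    U.indicator 1 ∈ SchwartzSp X :=
  ⟨(LocallyConstant.indicator (LocallyConstant.const X (1 : ℂ)) hU).isLocallyConstant,
    HasCompactSupport.intro' hc hU.isClosed fun _ hx => Set.indicator_of_notMem hx _⟩

theorem comp_homeomorph_mem {f : X → ℂ} (hf : f ∈ SchwartzSp X) (σ : X ≃ₜ X) :
    f ∘ σ ∈ SchwartzSp X :=
  ⟨hf.1.comp_continuous σ.continuous, hf.2.comp_homeomorph σ⟩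

theorem comp_val_mem {P : X → Prop} {f : X → ℂ} (hf : f ∈ SchwartzSp X)
    (hP : ∀ x ∈ tsupport f, P x) : f ∘ (Subtype.val : Subtype P → X) ∈ SchwartzSp (Subtype P) := by
  refine ⟨hf.1.comp_continuous continuous_subtype_val,
    HasCompactSupport.intro' (K := Subtype.val ⁻¹' tsupport f) ?_
      ((isClosed_tsupport f).preimage continuous_subtype_val)
      fun x hx => image_eq_zero_of_notMem_tsupport (f := f) hx⟩
  rw [Topology.IsEmbedding.subtypeVal.isCompact_iff, Set.image_preimage_eq_of_subset
    fun x hx => ⟨⟨x, hP x hx⟩, rfl⟩]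
  exact hf.2

end SchwartzSp

theorem isCompact_units_val_preimage {G₀ : Type*} [GroupWithZero G₀] [TopologicalSpace G₀]
    [ContinuousInv₀ G₀] {K : Set G₀} (hK : IsCompact K) (h0 : (0 : G₀) ∉ K) :
    IsCompact (Units.val ⁻¹' K) := by
  rw [Units.isEmbedding_val₀.isCompact_iff, Set.image_preimage_eq_of_subset
    fun x hx => ⟨Units.mk0 x (ne_of_mem_of_not_mem hx h0), rfl⟩]
  exact hK

theorem continuousInv₀_of_finiteDimensional (𝕜 F : Type*) [NontriviallyNormedField 𝕜]
    [CompleteSpace 𝕜] [Field F] [Algebra 𝕜 F] [FiniteDimensional 𝕜 F] [TopologicalSpace F]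
    [IsTopologicalRing F] [ContinuousSMul 𝕜 F] [T2Space F] : ContinuousInv₀ F := by
  classical
  let b := Module.finBasis 𝕜 F
  let L := Algebra.leftMulMatrix b
  have hL : Continuous L := L.toLinearMap.continuous_of_finiteDimensional
  have hLinv : ∀ x : F, x ≠ 0 → L x * L x⁻¹ = 1 := fun x hx => by
    rw [← map_mul, mul_inv_cancel₀ hx, map_one]
  -- Cramer's rule makes the right-hand side continuous wherever `det (L x) ≠ 0`.
  have hinv : ∀ x : F, x ≠ 0 → x⁻¹ = b.equivFunL.symm ((L x)⁻¹ *ᵥ b.equivFunL 1) := by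
    intro x hx
    rw [Matrix.inv_eq_right_inv (hLinv x hx)]
    apply b.equivFunL.injective
    rw [ContinuousLinearEquiv.apply_symm_apply]
    change b.equivFun x⁻¹ = L x⁻¹ *ᵥ b.equivFun 1
    simp only [Module.Basis.equivFun_apply, L, Algebra.leftMulMatrix_mulVec_repr, mul_one]
  refine ⟨fun x hx => ContinuousAt.congr ?_
    (Filter.mem_of_superset (isOpen_ne.mem_nhds hx) fun y hy => (hinv y hy).symm)⟩
  refine (b.equivFunL.symm.continuous.comp
    (continuous_id.matrix_mulVec continuous_const)).continuousAt.comp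
    ((continuousAt_matrix_inv _ ?_).comp hL.continuousAt)
  rw [Ring.inverse_eq_inv']
  exact continuousAt_inv₀ (Matrix.det_ne_zero_of_right_inverse (hLinv x hx))

theorem exists_isCompact_isOpen_contracting (𝕜 E : Type*) [NontriviallyNormedField 𝕜]
    [IsUltrametricDist 𝕜] [ProperSpace 𝕜] [AddCommGroup E] [Module 𝕜 E] [TopologicalSpace E]
    [IsTopologicalAddGroup E] [ContinuousSMul 𝕜 E] [T2Space E] [FiniteDimensional 𝕜 E]
    [Nontrivial E] :
    ∃ U : Set E, IsCompact U ∧ IsOpen U ∧ (0 : E) ∈ U ∧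
      ∃ c : 𝕜, c ≠ 0 ∧ (∀ x ∈ U, c • x ∈ U) ∧ ∃ y ∈ U, c⁻¹ • y ∉ U := by
  obtain ⟨c, hc0, hc1⟩ := NormedField.exists_norm_lt_one 𝕜
  let e := (Module.finBasis 𝕜 E).equivFunL
  have : Nonempty (Fin (Module.finrank 𝕜 E)) := ⟨⟨0, Module.finrank_pos⟩⟩
  have hone : ‖e (e.symm fun _ => 1)‖ = 1 := by simp [pi_norm_const]
  refine ⟨e ⁻¹' Metric.closedBall 0 1,
    e.toHomeomorph.isCompact_preimage.2 (isCompact_closedBall 0 1),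
    (IsUltrametricDist.isOpen_closedBall 0 one_ne_zero).preimage e.continuous, by simp,
    c, norm_pos_iff.1 hc0, fun x hx => ?_, e.symm fun _ => 1, by simp, ?_⟩
  · simp only [Set.mem_preimage, mem_closedBall_zero_iff, map_smul, norm_smul] at hx ⊢
    exact mul_le_one₀ hc1.le (norm_nonneg _) hx
  · simp only [Set.mem_preimage, mem_closedBall_zero_iff, map_smul, norm_smul, hone, mul_one,
      norm_inv, not_le]
    exact one_lt_inv_iff₀.2 ⟨hc0, hc1⟩

section Shell

variable {F : Type*} [Field F]

def contractionShell (U : Set F) (t : Fˣ) : Set Fˣ :=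
  {y | (y : F) ∈ U ∧ (t : F)⁻¹ * y ∉ U}

variable {U : Set F} {t : Fˣ}

theorem contractionShell_nonempty (hy : ∃ y ∈ U, (t : F)⁻¹ * y ∉ U) (hU0 : (0 : F) ∈ U) :
    (contractionShell U t).Nonempty := by
  obtain ⟨y, hyU, hy⟩ := hy
  have hy0 : y ≠ 0 := by rintro rfl; simp [hU0] at hy
  exact ⟨Units.mk0 y hy0, hyU, hy⟩

variable [TopologicalSpace F] [IsTopologicalRing F]

theorem isCompact_contractionShell [ContinuousInv₀ F] (hUc : IsCompact U) (hUo : IsOpen U)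
    (hU0 : (0 : F) ∈ U) : IsCompact (contractionShell U t) :=
  isCompact_units_val_preimage
    (hUc.inter_right (hUo.preimage (continuous_const_mul _)).isClosed_compl)
    fun h => h.2 (by simpa using hU0)

theorem isOpen_contractionShell [T2Space F] (hUc : IsCompact U) (hUo : IsOpen U) :
    IsOpen (contractionShell U t) :=
  (hUo.inter (hUc.isClosed.preimage (continuous_const_mul _)).isOpen_compl).preimage
    Units.continuous_val

variable (t) in
def hyperbolicAct : F × F ≃ₜ F × F :=
  (Homeomorph.mulLeft₀ (t : F) t.ne_zero).prodCongr
    (Homeomorph.mulLeft₀ ((t⁻¹ : Fˣ) : F) (t⁻¹).ne_zero)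

theorem hyperbolicAct_apply (v : F × F) :
    hyperbolicAct t v = ((t : F) * v.1, (t : F)⁻¹ * v.2) := by
  rw [← Units.val_inv_eq_inv_val]
  rfl

variable (U t) in
def shellTestFun : F × F → ℂ :=
  (U ×ˢ U).indicator 1 ∘ hyperbolicAct t - (U ×ˢ U).indicator 1

theorem shellTestFun_mem [T2Space F] (hUc : IsCompact U) (hUo : IsOpen U) :
    shellTestFun U t ∈ SchwartzSp (F × F) :=
  have hφ := SchwartzSp.indicator_one_mem (hUc.prod hUc)
    ⟨hUc.isClosed.prod hUc.isClosed, hUo.prod hUo⟩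
  sub_mem (SchwartzSp.comp_homeomorph_mem hφ (hyperbolicAct t)) hφ

theorem shellTestFun_eventuallyEq_zero (hUo : IsOpen U) (hU0 : (0 : F) ∈ U)
    (htU : ∀ x ∈ U, (t : F) * x ∈ U) : shellTestFun U t =ᶠ[𝓝 0] 0 := by
  have hW : U ×ˢ (((t : F)⁻¹ * ·) ⁻¹' U) ∈ 𝓝 (0 : F × F) :=
    (hUo.prod (hUo.preimage (continuous_const_mul _))).mem_nhds ⟨hU0, by simpa using hU0⟩
  filter_upwards [hW] with v ⟨hv₁, hv₂⟩
  have hv₂' : v.2 ∈ U := by simpa using htU _ hv₂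
  simp_all [shellTestFun, hyperbolicAct_apply]

theorem shellTestFun_apply_fst (hU0 : (0 : F) ∈ U) (htU : ∀ x ∈ U, (t : F) * x ∈ U) (x : Fˣ) :
    shellTestFun U t ((x : F), 0) =
      ((t * ·) ⁻¹' contractionShell U t).indicator (fun _ => 1) x := by
  by_cases hx : (x : F) ∈ U
  · simp [shellTestFun, hyperbolicAct_apply, contractionShell, hU0, hx, htU _ hx]
  · by_cases htx : (t : F) * x ∈ U <;>
      simp [shellTestFun, hyperbolicAct_apply, contractionShell, hU0, hx, htx]

theorem shellTestFun_apply_snd (hU0 : (0 : F) ∈ U) (htU : ∀ x ∈ U, (t : F) * x ∈ U) (y : Fˣ) :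
    shellTestFun U t (0, (y : F)) = -(contractionShell U t).indicator (fun _ => 1) y := by
  by_cases hy : (t : F)⁻¹ * y ∈ U
  · have hyU : (y : F) ∈ U := by simpa using htU _ hy
    simp [shellTestFun, hyperbolicAct_apply, contractionShell, hU0, hy, hyU]
  · by_cases hyU : (y : F) ∈ U <;>
      simp [shellTestFun, hyperbolicAct_apply, contractionShell, hU0, hy, hyU]

end Shell

theorem no_invariant_extension_of_contracting {F : Type*} [Field F] [TopologicalSpace F]
    [IsTopologicalRing F] [T2Space F] [ContinuousInv₀ F] [MeasurableSpace Fˣ] [BorelSpace Fˣ]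
    (μ : Measure Fˣ) [μ.IsHaarMeasure] {U : Set F} {t : Fˣ} (hUc : IsCompact U) (hUo : IsOpen U)
    (hU0 : (0 : F) ∈ U) (htU : ∀ x ∈ U, (t : F) * x ∈ U) (hy : ∃ y ∈ U, (t : F)⁻¹ * y ∉ U) :
    ¬ ∃ T : Distrn (F × F),
      (∀ t : Fˣ, TransformsBy T (fun v => ((t : F) * v.1, ((t⁻¹ : Fˣ) : F) * v.2)) 1) ∧
      (∀ (f : ↥(SchwartzSp {v : F × F // v ≠ 0})) (g : ↥(SchwartzSp (F × F))),
        (∀ (v : F × F) (hv : v ≠ 0), (g : F × F → ℂ) v = (f : {v : F × F // v ≠ 0} → ℂ) ⟨v, hv⟩) →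
        (g : F × F → ℂ) 0 = 0 →
        T g = (∫ x : Fˣ, (f : {v : F × F // v ≠ 0} → ℂ)
                  ⟨((x : F), 0), fun h => x.ne_zero (congrArg Prod.fst h)⟩ ∂μ)
              - ∫ y : Fˣ, (f : {v : F × F // v ≠ 0} → ℂ)
                  ⟨(0, (y : F)), fun h => y.ne_zero (congrArg Prod.snd h)⟩ ∂μ) := by
  rintro ⟨T, hinv, hres⟩
  have hφ := SchwartzSp.indicator_one_mem (hUc.prod hUc)
    ⟨hUc.isClosed.prod hUc.isClosed, hUo.prod hUo⟩
  let φ : SchwartzSp (F × F) := ⟨_, hφ⟩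
  let ψ : SchwartzSp (F × F) := ⟨_, SchwartzSp.comp_homeomorph_mem hφ (hyperbolicAct t)⟩
  have hT : T (ψ - φ) = 0 := by rw [map_sub, hinv t φ ψ fun _ => rfl, one_mul, sub_self]
  have hev : shellTestFun U t =ᶠ[𝓝 0] 0 := shellTestFun_eventuallyEq_zero hUo hU0 htU
  let f₀ : SchwartzSp {v : F × F // v ≠ 0} := ⟨shellTestFun U t ∘ Subtype.val,
    SchwartzSp.comp_val_mem (shellTestFun_mem hUc hUo)
      fun v hv h0 => (notMem_tsupport_iff_eventuallyEq.2 hev) (h0 ▸ hv)⟩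
  have hT₀ := hres f₀ (ψ - φ) (fun _ _ => rfl) hev.eq_of_nhds
  have hB : MeasurableSet (contractionShell U t) := (isOpen_contractionShell hUc hUo).measurableSet
  have hA : μ.real ((t * ·) ⁻¹' contractionShell U t) = μ.real (contractionShell U t) := by
    rw [measureReal_def, measure_preimage_mul, measureReal_def]
  simp only [f₀, Function.comp_apply, shellTestFun_apply_fst hU0 htU,
    shellTestFun_apply_snd hU0 htU, integral_neg, integral_indicator_const (1 : ℂ) hB,
    integral_indicator_const (1 : ℂ) (hB.preimage (measurable_const_mul t)), hT, hA,
    Complex.real_smul, mul_one, sub_neg_eq_add] at hT₀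
  have hBpos : 0 < μ.real (contractionShell U t) := ENNReal.toReal_pos
    ((isOpen_contractionShell hUc hUo).measure_ne_zero μ (contractionShell_nonempty hy hU0))
    (isCompact_contractionShell hUc hUo hU0).measure_lt_top.ne
  have : μ.real (contractionShell U t) + μ.real (contractionShell U t) = 0 := by
    exact_mod_cast hT₀.symm
  linarith

/-- Let `F^×` act on `F²` by `t·(x,y) = (tx, t⁻¹y)`, and let
`T₀(f) = ∫_{F^×} f(x,0) d^*x − ∫_{F^×} f(0,y) d^*y` (a distribution on `F² ∖ {0}`,
`d^*x` a Haar measure on `F^×`).  Then there is no `F^×`-invariant distribution on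
`F²` whose restriction to `S(F² ∖ {0})` (embedded in `S(F²)` by extension by zero)
equals `T₀`. -/
theorem no_invariant_extension_of_T0 (p : ℕ) [Fact p.Prime] (F : Type) [Field F] [TopologicalSpace F]
    [IsTopologicalRing F] [Algebra ℚ_[p] F] [FiniteDimensional ℚ_[p] F]
    [ContinuousSMul ℚ_[p] F] [T2Space F]
    [MeasurableSpace Fˣ] [BorelSpace Fˣ]
    (μ : MeasureTheory.Measure Fˣ) [μ.IsHaarMeasure] :
    ¬ ∃ T : Distrn (F × F),
      (∀ t : Fˣ, TransformsBy T (fun v => ((t : F) * v.1, ((t⁻¹ : Fˣ) : F) * v.2)) 1) ∧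
      (∀ (f : ↥(SchwartzSp {v : F × F // v ≠ 0})) (g : ↥(SchwartzSp (F × F))),
        (∀ (v : F × F) (hv : v ≠ 0), (g : F × F → ℂ) v = (f : {v : F × F // v ≠ 0} → ℂ) ⟨v, hv⟩) →
        (g : F × F → ℂ) 0 = 0 →
        T g = (∫ x : Fˣ, (f : {v : F × F // v ≠ 0} → ℂ)
                  ⟨((x : F), 0), fun h => x.ne_zero (congrArg Prod.fst h)⟩ ∂μ)
              - ∫ y : Fˣ, (f : {v : F × F // v ≠ 0} → ℂ)
                  ⟨(0, (y : F)), fun h => y.ne_zero (congrArg Prod.snd h)⟩ ∂μ) := by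
  have : ContinuousInv₀ F := continuousInv₀_of_finiteDimensional ℚ_[p] F
  obtain ⟨U, hUc, hUo, hU0, c, hc, hcU, y, hyU, hy⟩ :=
    exists_isCompact_isOpen_contracting ℚ_[p] F
  let t : Fˣ := Units.mk0 (algebraMap ℚ_[p] F c) (by simpa using hc)
  refine no_invariant_extension_of_contracting μ (t := t) hUc hUo hU0
    (fun x hx => by simpa [t, Algebra.smul_def] using hcU x hx) ⟨y, hyU, ?_⟩
  simpa [t, Algebra.smul_def] using hy
end
end

section
/- Let d ≥ 2 with d ≡ 2 mod 4, and let V = F^d with basis (e_i)_{i=1,…,d/2} ∪ (f_i)_{i=1,…,d/2}, where each subfamily spans a totally isotropic subspace and <e_i, f_j> = (−1)^i δ_{i, d/2+1−j}. Let X ∈ End(V) satisfy X e_i = e_{i−1}, X f_i = f_{i−1} for i ≥ 2 and X e_1 = X f_1 = 0. Set V⁺ := span{e_i + f_i : 1 ≤ i ≤ d/2} and V⁻ := span{e_i − f_i : 1 ≤ i ≤ d/2}. Then V = V⁺ ⊕ V⁻, V⁺ and V⁻ are orthogonal to each other, both are X-stable, the restriction of <.,.> to each is nondegenerate with <e_i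 ± f_i, e_j ± f_j> = ±2(−1)^i δ_{i, d/2+1−j}, and X acts on each of V⁺, V⁻ (in the bases (e_i + f_i)_i, resp. (e_i − f_i)_i) as a single nilpotent Jordan block of odd size d/2. -/
open Matrix

/-!
In the coordinates `v = x ⊕ᵥ y` (`e`- and `f`-components) the form is `fromBlocks 0 J Jᵀ 0`
for the signed antidiagonal matrix `J = antidiagSign`, i.e.
`⟪x ⊕ᵥ y, x' ⊕ᵥ y'⟫ = x J y' + x' J y`, and `X = fromBlocks N 0 0 N` for the nilpotent Jordan
block `N = shiftMatrix`. As `d / 2` is odd, the indices `i` and `d / 2 - 1 - i` have the same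
parity, so `J` is symmetric. Now `V⁺ = {c ⊕ᵥ c}` and `V⁻ = {c ⊕ᵥ -c}`: on them the form reads
`±2 c J c'`, the mixed pairing `-c J c' + c' J c` vanishes by symmetry, and since `2 ≠ 0` and `J`
is a signed permutation matrix both restrictions are nondegenerate. Finally
`X (c ⊕ᵥ ±c) = N c ⊕ᵥ ±N c`, so `X` acts on both summands as `N`.
-/

/-- The vector `e_i + f_i` in `V = (Fin m ⊕ Fin m) → F`. -/
def sumVec (F : Type) [Field F] (m : ℕ) (i : Fin m) : (Fin m ⊕ Fin m) → F :=
  Pi.single (Sum.inl i) 1 + Pi.single (Sum.inr i) 1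

/-- The vector `e_i − f_i` in `V = (Fin m ⊕ Fin m) → F`. -/
def diffVec (F : Type) [Field F] (m : ℕ) (i : Fin m) : (Fin m ⊕ Fin m) → F :=
  Pi.single (Sum.inl i) 1 - Pi.single (Sum.inr i) 1

def antidiagSign (R : Type*) [Ring R] (m : ℕ) : Matrix (Fin m) (Fin m) R :=
  Matrix.of fun i j => if (i : ℕ) + j + 2 = m + 1 then (-1) ^ ((i : ℕ) + 1) else 0

def shiftMatrix (R : Type*) [Zero R] [One R] (m : ℕ) : Matrix (Fin m) (Fin m) R :=
  Matrix.of fun i j => if (i : ℕ) + 1 = j then 1 else 0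

namespace Matrix

variable {n R : Type*} [Fintype n] [CommRing R] (J : Matrix n n R)

theorem sumElim_dotProduct_fromBlocks_mulVec_sumElim (u v x y : n → R) :
    (u ⊕ᵥ v) ⬝ᵥ fromBlocks 0 J Jᵀ 0 *ᵥ (x ⊕ᵥ y) = u ⬝ᵥ J *ᵥ y + x ⬝ᵥ J *ᵥ v := by
  simp [fromBlocks_mulVec, Function.comp_def, dotProduct_transpose_mulVec]

variable {J}

theorem IsSymm.dotProduct_mulVec_comm (hJ : J.IsSymm) (x y : n → R) :
    x ⬝ᵥ J *ᵥ y = y ⬝ᵥ J *ᵥ x := by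
  rw [← dotProduct_transpose_mulVec, hJ.eq]

theorem IsSymm.sumElim_dotProduct_fromBlocks_mulVec_sumElim_self (hJ : J.IsSymm)
    (c c' : n → R) :
    (c ⊕ᵥ c) ⬝ᵥ Matrix.fromBlocks 0 J Jᵀ 0 *ᵥ (c' ⊕ᵥ c') = 2 * (c ⬝ᵥ J *ᵥ c') := by
  rw [sumElim_dotProduct_fromBlocks_mulVec_sumElim, hJ.dotProduct_mulVec_comm c']
  ring

theorem IsSymm.sumElim_dotProduct_fromBlocks_mulVec_sumElim_neg (hJ : J.IsSymm)
    (c c' : n → R) :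
    (c ⊕ᵥ -c) ⬝ᵥ Matrix.fromBlocks 0 J Jᵀ 0 *ᵥ (c' ⊕ᵥ -c') = -(2 * (c ⬝ᵥ J *ᵥ c')) := by
  rw [sumElim_dotProduct_fromBlocks_mulVec_sumElim, hJ.dotProduct_mulVec_comm c']
  simp only [mulVec_neg, dotProduct_neg, neg_dotProduct]
  ring

theorem IsSymm.sumElim_dotProduct_fromBlocks_mulVec_sumElim_self_neg (hJ : J.IsSymm)
    (c c' : n → R) :
    (c ⊕ᵥ c) ⬝ᵥ Matrix.fromBlocks 0 J Jᵀ 0 *ᵥ (c' ⊕ᵥ -c') = 0 := by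
  rw [sumElim_dotProduct_fromBlocks_mulVec_sumElim, hJ.dotProduct_mulVec_comm c']
  simp only [mulVec_neg, dotProduct_neg]
  ring

theorem fromBlocks_zero_zero_mulVec_sumElim (A D : Matrix n n R) (x y : n → R) :
    fromBlocks A 0 0 D *ᵥ (x ⊕ᵥ y) = A *ᵥ x ⊕ᵥ D *ᵥ y := by
  simp [fromBlocks_mulVec, Function.comp_def]

end Matrix

section

variable {R : Type*} [CommRing R] {m : ℕ}

theorem antidiagSign_isSymm (hm : Odd m) : (antidiagSign R m).IsSymm := by
  ext i j
  simp only [transpose_apply, antidiagSign, of_apply]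
  by_cases h : (j : ℕ) + i + 2 = m + 1
  · rw [if_pos h, if_pos (by omega), neg_one_pow_eq_pow_mod_two,
      neg_one_pow_eq_pow_mod_two (n := (i : ℕ) + 1)]
    obtain ⟨k, rfl⟩ := hm
    congr 1
    omega
  · rw [if_neg h, if_neg (by omega)]

theorem antidiagSign_apply_rev (i j : Fin m) :
    antidiagSign R m j i.rev = if j = i then (-1) ^ ((i : ℕ) + 1) else 0 := by
  have hrev : (j : ℕ) + i.rev + 2 = m + 1 ↔ j = i := by rw [Fin.val_rev, Fin.ext_iff]; omega
  simp only [antidiagSign, of_apply, hrev]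
  split_ifs with h
  · rw [h]
  · rfl

theorem antidiagSign_separatingLeft : (antidiagSign R m).SeparatingLeft := by
  refine separatingLeft_iff_forall_vecMul_eq_zero.2 fun c hc => funext fun i => ?_
  have hsum : (c ᵥ* antidiagSign R m) i.rev = c i * (-1) ^ ((i : ℕ) + 1) := by
    simp [vecMul, dotProduct, antidiagSign_apply_rev]
  rw [hc, Pi.zero_apply, eq_comm] at hsum
  exact (isUnit_neg_one.pow _).mul_left_eq_zero.1 hsum

theorem shiftMatrix_mulVec_single_one (k : Fin m) :
    shiftMatrix R m *ᵥ Pi.single k 1 = if _ : (k : ℕ) = 0 then 0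
      else Pi.single ⟨(k : ℕ) - 1, lt_of_le_of_lt (Nat.sub_le _ _) k.isLt⟩ 1 := by
  ext i
  rw [mulVec_single_one]
  split_ifs with hk
  · simp [shiftMatrix, hk]
  · have : (i : ℕ) + 1 = k ↔ (i : ℕ) = k - 1 := by omega
    simp [shiftMatrix, Pi.single_apply, Fin.ext_iff, this]

end

section Splitting

variable {F : Type} [Field F] {m : ℕ}

theorem sumVec_eq_sumElim (i : Fin m) :
    sumVec F m i = Pi.single i 1 ⊕ᵥ Pi.single i 1 := by
  simp [sumVec, ← Sum.elim_single_zero, ← Sum.elim_zero_single, ← Sum.elim_add_add]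

theorem diffVec_eq_sumElim (i : Fin m) :
    diffVec F m i = Pi.single i 1 ⊕ᵥ -Pi.single i 1 := by
  simp [diffVec, ← Sum.elim_single_zero, ← Sum.elim_zero_single, ← Sum.elim_sub_sub]

theorem mem_span_range_single_sumElim_smul_single_iff (s : F) {v : Fin m ⊕ Fin m → F} :
    v ∈ Submodule.span F (Set.range fun i : Fin m => Pi.single i 1 ⊕ᵥ s • Pi.single i 1) ↔
      ∃ c, (c ⊕ᵥ s • c) = v := by
  constructor
  · intro hv
    induction hv using Submodule.span_induction with
    | mem x hx => obtain ⟨i, rfl⟩ := hx; exact ⟨_, rfl⟩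
    | zero => exact ⟨0, by simp⟩
    | add x y _ _ hx hy =>
      obtain ⟨c, rfl⟩ := hx
      obtain ⟨c', rfl⟩ := hy
      exact ⟨c + c', by simp [Sum.elim_add_add]⟩
    | smul a x _ hx =>
      obtain ⟨c, rfl⟩ := hx
      exact ⟨a • c, by ext (i | i) <;> simp [mul_left_comm]⟩
  · rintro ⟨c, rfl⟩
    have : (c ⊕ᵥ s • c) = ∑ i, c i • (Pi.single i 1 ⊕ᵥ s • Pi.single i 1) := by
      ext (j | j) <;> simp [Finset.sum_apply, Pi.single_apply, mul_comm]
    rw [this]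
    exact Submodule.sum_mem _ fun i _ => Submodule.smul_mem _ _ (Submodule.subset_span ⟨i, rfl⟩)

theorem mem_span_sumVec_iff {v : Fin m ⊕ Fin m → F} :
    v ∈ Submodule.span F (Set.range (sumVec F m)) ↔ ∃ c, (c ⊕ᵥ c) = v := by
  rw [show sumVec F m = _ from funext sumVec_eq_sumElim]
  simpa using mem_span_range_single_sumElim_smul_single_iff (1 : F)

theorem mem_span_diffVec_iff {v : Fin m ⊕ Fin m → F} :
    v ∈ Submodule.span F (Set.range (diffVec F m)) ↔ ∃ c, (c ⊕ᵥ -c) = v := by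
  rw [show diffVec F m = _ from funext diffVec_eq_sumElim]
  simpa using mem_span_range_single_sumElim_smul_single_iff (-1 : F)

theorem isCompl_span_sumVec_span_diffVec (h2 : (2 : F) ≠ 0) :
    IsCompl (Submodule.span F (Set.range (sumVec F m)))
      (Submodule.span F (Set.range (diffVec F m))) := by
  constructor
  · rw [Submodule.disjoint_def]
    intro v hplus hminus
    obtain ⟨c, rfl⟩ := mem_span_sumVec_iff.1 hplus
    obtain ⟨c', hc'⟩ := mem_span_diffVec_iff.1 hminus
    have hl : c' = c := by simpa using congrArg (· ∘ Sum.inl) hc'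
    have hr : -c' = c := by simpa using congrArg (· ∘ Sum.inr) hc'
    subst hl
    have : (2 : F) • c' = 0 := by rw [two_smul]; nth_rw 1 [← hr]; exact neg_add_cancel _
    simp [(smul_eq_zero.1 this).resolve_left h2]
  · rw [codisjoint_iff, eq_top_iff]
    rintro v -
    set a := (2 : F)⁻¹ • (v ∘ Sum.inl + v ∘ Sum.inr)
    set b := (2 : F)⁻¹ • (v ∘ Sum.inl - v ∘ Sum.inr)
    refine Submodule.mem_sup.2 ⟨a ⊕ᵥ a, mem_span_sumVec_iff.2 ⟨a, rfl⟩,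
      b ⊕ᵥ -b, mem_span_diffVec_iff.2 ⟨b, rfl⟩, ?_⟩
    ext (i | i) <;> simp [a, b] <;> field_simp <;> ring

variable {J : Matrix (Fin m) (Fin m) F}

theorem dotProduct_mulVec_eq_zero_of_mem_span_sumVec_of_mem_span_diffVec
    (hJ : J.IsSymm) {v w : Fin m ⊕ Fin m → F}
    (hv : v ∈ Submodule.span F (Set.range (sumVec F m)))
    (hw : w ∈ Submodule.span F (Set.range (diffVec F m))) :
    v ⬝ᵥ fromBlocks 0 J Jᵀ 0 *ᵥ w = 0 := by
  obtain ⟨c, rfl⟩ := mem_span_sumVec_iff.1 hv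
  obtain ⟨c', rfl⟩ := mem_span_diffVec_iff.1 hw
  exact hJ.sumElim_dotProduct_fromBlocks_mulVec_sumElim_self_neg c c'

theorem sumVec_dotProduct_fromBlocks_mulVec_sumVec (hJ : J.IsSymm) (i j : Fin m) :
    sumVec F m i ⬝ᵥ fromBlocks 0 J Jᵀ 0 *ᵥ sumVec F m j = 2 * J i j := by
  simp [sumVec_eq_sumElim, hJ.sumElim_dotProduct_fromBlocks_mulVec_sumElim_self]

theorem diffVec_dotProduct_fromBlocks_mulVec_diffVec (hJ : J.IsSymm) (i j : Fin m) :
    diffVec F m i ⬝ᵥ fromBlocks 0 J Jᵀ 0 *ᵥ diffVec F m j = -(2 * J i j) := by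
  simp [diffVec_eq_sumElim, hJ.sumElim_dotProduct_fromBlocks_mulVec_sumElim_neg]

theorem eq_zero_of_mem_span_sumVec_of_ortho
    (h2 : (2 : F) ≠ 0) (hJ : J.IsSymm) (hJsep : J.SeparatingLeft) {v : Fin m ⊕ Fin m → F}
    (hv : v ∈ Submodule.span F (Set.range (sumVec F m)))
    (hortho : ∀ w ∈ Submodule.span F (Set.range (sumVec F m)),
      v ⬝ᵥ fromBlocks 0 J Jᵀ 0 *ᵥ w = 0) : v = 0 := by
  obtain ⟨c, rfl⟩ := mem_span_sumVec_iff.1 hv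
  suffices c = 0 by simp [this]
  refine separatingLeft_def.1 hJsep c fun c' => ?_
  have := hortho (c' ⊕ᵥ c') (mem_span_sumVec_iff.2 ⟨c', rfl⟩)
  rw [hJ.sumElim_dotProduct_fromBlocks_mulVec_sumElim_self] at this
  exact (mul_eq_zero.1 this).resolve_left h2

theorem eq_zero_of_mem_span_diffVec_of_ortho
    (h2 : (2 : F) ≠ 0) (hJ : J.IsSymm) (hJsep : J.SeparatingLeft) {v : Fin m ⊕ Fin m → F}
    (hv : v ∈ Submodule.span F (Set.range (diffVec F m)))
    (hortho : ∀ w ∈ Submodule.span F (Set.range (diffVec F m)),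
      v ⬝ᵥ fromBlocks 0 J Jᵀ 0 *ᵥ w = 0) : v = 0 := by
  obtain ⟨c, rfl⟩ := mem_span_diffVec_iff.1 hv
  suffices c = 0 by simp [this]
  refine separatingLeft_def.1 hJsep c fun c' => ?_
  have := hortho (c' ⊕ᵥ -c') (mem_span_diffVec_iff.2 ⟨c', rfl⟩)
  rw [hJ.sumElim_dotProduct_fromBlocks_mulVec_sumElim_neg, neg_eq_zero] at this
  exact (mul_eq_zero.1 this).resolve_left h2

theorem fromBlocks_mulVec_mem_span_sumVec (N : Matrix (Fin m) (Fin m) F)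
    {v : Fin m ⊕ Fin m → F}
    (hv : v ∈ Submodule.span F (Set.range (sumVec F m))) :
    fromBlocks N 0 0 N *ᵥ v ∈ Submodule.span F (Set.range (sumVec F m)) := by
  obtain ⟨c, rfl⟩ := mem_span_sumVec_iff.1 hv
  exact mem_span_sumVec_iff.2 ⟨N *ᵥ c, (fromBlocks_zero_zero_mulVec_sumElim N N c c).symm⟩

theorem fromBlocks_mulVec_mem_span_diffVec (N : Matrix (Fin m) (Fin m) F)
    {v : Fin m ⊕ Fin m → F}
    (hv : v ∈ Submodule.span F (Set.range (diffVec F m))) :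
    fromBlocks N 0 0 N *ᵥ v ∈ Submodule.span F (Set.range (diffVec F m)) := by
  obtain ⟨c, rfl⟩ := mem_span_diffVec_iff.1 hv
  refine mem_span_diffVec_iff.2 ⟨N *ᵥ c, ?_⟩
  rw [fromBlocks_zero_zero_mulVec_sumElim, mulVec_neg]

theorem fromBlocks_shiftMatrix_mulVec_sumVec (k : Fin m) :
    fromBlocks (shiftMatrix F m) 0 0 (shiftMatrix F m) *ᵥ sumVec F m k =
      if _ : (k : ℕ) = 0 then 0
      else sumVec F m ⟨(k : ℕ) - 1, lt_of_le_of_lt (Nat.sub_le _ _) k.isLt⟩ := by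
  rw [sumVec_eq_sumElim, fromBlocks_zero_zero_mulVec_sumElim, shiftMatrix_mulVec_single_one]
  split_ifs <;> simp [sumVec_eq_sumElim]

theorem fromBlocks_shiftMatrix_mulVec_diffVec (k : Fin m) :
    fromBlocks (shiftMatrix F m) 0 0 (shiftMatrix F m) *ᵥ diffVec F m k =
      if _ : (k : ℕ) = 0 then 0
      else diffVec F m ⟨(k : ℕ) - 1, lt_of_le_of_lt (Nat.sub_le _ _) k.isLt⟩ := by
  rw [diffVec_eq_sumElim, fromBlocks_zero_zero_mulVec_sumElim, mulVec_neg,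
    shiftMatrix_mulVec_single_one]
  split_ifs <;> simp [diffVec_eq_sumElim]

end Splitting

theorem split_into_two_odd_jordan_blocks_general (p : ℕ) [Fact p.Prime] (F : Type) [Field F] [Algebra ℚ_[p] F]
    (d : ℕ) (hd4 : d % 4 = 2)
    (B : Matrix (Fin (d / 2) ⊕ Fin (d / 2)) (Fin (d / 2) ⊕ Fin (d / 2)) F)
    (hBee : ∀ i j : Fin (d / 2), B (Sum.inl i) (Sum.inl j) = 0)
    (hBff : ∀ i j : Fin (d / 2), B (Sum.inr i) (Sum.inr j) = 0)
    (hBef : ∀ i j : Fin (d / 2), B (Sum.inl i) (Sum.inr j)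
      = if (i : ℕ) + (j : ℕ) + 2 = d / 2 + 1 then (-1 : F) ^ ((i : ℕ) + 1) else 0)
    (hBfe : ∀ i j : Fin (d / 2), B (Sum.inr i) (Sum.inl j)
      = if (j : ℕ) + (i : ℕ) + 2 = d / 2 + 1 then (-1 : F) ^ ((j : ℕ) + 1) else 0)
    (X : Matrix (Fin (d / 2) ⊕ Fin (d / 2)) (Fin (d / 2) ⊕ Fin (d / 2)) F)
    (hXee : ∀ i j : Fin (d / 2), X (Sum.inl i) (Sum.inl j)
      = if (i : ℕ) + 1 = (j : ℕ) then 1 else 0)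
    (hXff : ∀ i j : Fin (d / 2), X (Sum.inr i) (Sum.inr j)
      = if (i : ℕ) + 1 = (j : ℕ) then 1 else 0)
    (hXef : ∀ i j : Fin (d / 2), X (Sum.inl i) (Sum.inr j) = 0)
    (hXfe : ∀ i j : Fin (d / 2), X (Sum.inr i) (Sum.inl j) = 0) :
    IsCompl (Submodule.span F (Set.range (sumVec F (d / 2))))
        (Submodule.span F (Set.range (diffVec F (d / 2)))) ∧
    (∀ v ∈ Submodule.span F (Set.range (sumVec F (d / 2))),
      ∀ w ∈ Submodule.span F (Set.range (diffVec F (d / 2))), v ⬝ᵥ B.mulVec w = 0) ∧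
    (∀ v ∈ Submodule.span F (Set.range (sumVec F (d / 2))),
      X.mulVec v ∈ Submodule.span F (Set.range (sumVec F (d / 2)))) ∧
    (∀ v ∈ Submodule.span F (Set.range (diffVec F (d / 2))),
      X.mulVec v ∈ Submodule.span F (Set.range (diffVec F (d / 2)))) ∧
    (∀ i j : Fin (d / 2), sumVec F (d / 2) i ⬝ᵥ B.mulVec (sumVec F (d / 2) j)
      = if (i : ℕ) + (j : ℕ) + 2 = d / 2 + 1 then 2 * (-1 : F) ^ ((i : ℕ) + 1) else 0) ∧
    (∀ i j : Fin (d / 2), diffVec F (d / 2) i ⬝ᵥ B.mulVec (diffVec F (d / 2) j)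
      = if (i : ℕ) + (j : ℕ) + 2 = d / 2 + 1 then -(2 * (-1 : F) ^ ((i : ℕ) + 1)) else 0) ∧
    (∀ v ∈ Submodule.span F (Set.range (sumVec F (d / 2))),
      (∀ w ∈ Submodule.span F (Set.range (sumVec F (d / 2))), v ⬝ᵥ B.mulVec w = 0) → v = 0) ∧
    (∀ v ∈ Submodule.span F (Set.range (diffVec F (d / 2))),
      (∀ w ∈ Submodule.span F (Set.range (diffVec F (d / 2))), v ⬝ᵥ B.mulVec w = 0) → v = 0) ∧
    Odd (d / 2) ∧
    (∀ k : Fin (d / 2), X.mulVec (sumVec F (d / 2) k)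
      = if hk : (k : ℕ) = 0 then 0
        else sumVec F (d / 2) ⟨(k : ℕ) - 1, lt_of_le_of_lt (Nat.sub_le _ _) k.isLt⟩) ∧
    (∀ k : Fin (d / 2), X.mulVec (diffVec F (d / 2) k)
      = if hk : (k : ℕ) = 0 then 0
        else diffVec F (d / 2) ⟨(k : ℕ) - 1, lt_of_le_of_lt (Nat.sub_le _ _) k.isLt⟩) := by
  have : CharZero F := charZero_of_injective_algebraMap (algebraMap ℚ_[p] F).injective
  have hm : Odd (d / 2) := Nat.odd_iff.2 (by omega)
  have hB : B = fromBlocks 0 (antidiagSign F (d / 2)) (antidiagSign F (d / 2))ᵀ 0 := by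
    ext (i | i) (j | j) <;> simp [hBee, hBef, hBfe, hBff, antidiagSign]
  have hX : X = fromBlocks (shiftMatrix F (d / 2)) 0 0 (shiftMatrix F (d / 2)) := by
    ext (i | i) (j | j) <;> simp [hXee, hXef, hXfe, hXff, shiftMatrix]
  subst hB hX
  have hJ : (antidiagSign F (d / 2)).IsSymm := antidiagSign_isSymm hm
  have hJsep := antidiagSign_separatingLeft (R := F) (m := d / 2)
  refine ⟨isCompl_span_sumVec_span_diffVec two_ne_zero,
    fun _ hv _ hw => dotProduct_mulVec_eq_zero_of_mem_span_sumVec_of_mem_span_diffVec hJ hv hw,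
    fun _ => fromBlocks_mulVec_mem_span_sumVec _, fun _ => fromBlocks_mulVec_mem_span_diffVec _,
    fun i j => ?_, fun i j => ?_,
    fun _ => eq_zero_of_mem_span_sumVec_of_ortho two_ne_zero hJ hJsep,
    fun _ => eq_zero_of_mem_span_diffVec_of_ortho two_ne_zero hJ hJsep,
    hm, fromBlocks_shiftMatrix_mulVec_sumVec, fromBlocks_shiftMatrix_mulVec_diffVec⟩
  · rw [sumVec_dotProduct_fromBlocks_mulVec_sumVec hJ, antidiagSign, of_apply, mul_ite, mul_zero]
  · rw [diffVec_dotProduct_fromBlocks_mulVec_diffVec hJ, antidiagSign, of_apply, mul_ite, mul_zero,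
      apply_ite Neg.neg, neg_zero]

/-- Let `d ≡ 2 mod 4` and `V = F^d` with basis `(e_i) ∪ (f_i)` (`1 ≤ i ≤ d/2`; here
`V = (Fin (d/2) ⊕ Fin (d/2)) → F`), each subfamily spanning a totally isotropic subspace,
`<e_i, f_j> = (−1)^i δ_{i, d/2+1−j}`, and `X e_i = e_{i−1}`, `X f_i = f_{i−1}`,
`X e_1 = X f_1 = 0`.  Set `V⁺ = span{e_i + f_i}`, `V⁻ = span{e_i − f_i}`.  Then
`V = V⁺ ⊕ V⁻`, the two summands are orthogonal and `X`-stable, the restricted forms are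
nondegenerate with `<e_i ± f_i, e_j ± f_j> = ±2(−1)^i δ_{i, d/2+1−j}`, and `X` acts on
each summand (in the bases `(e_i + f_i)`, resp. `(e_i − f_i)`) as a single nilpotent
Jordan block of odd size `d/2`. -/
theorem split_into_two_odd_jordan_blocks (p : ℕ) [Fact p.Prime] (F : Type) [Field F] [Algebra ℚ_[p] F]
    [FiniteDimensional ℚ_[p] F]
    (d : ℕ) (hd : 2 ≤ d) (hd4 : d % 4 = 2)
    (B : Matrix (Fin (d / 2) ⊕ Fin (d / 2)) (Fin (d / 2) ⊕ Fin (d / 2)) F)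
    (hBee : ∀ i j : Fin (d / 2), B (Sum.inl i) (Sum.inl j) = 0)
    (hBff : ∀ i j : Fin (d / 2), B (Sum.inr i) (Sum.inr j) = 0)
    (hBef : ∀ i j : Fin (d / 2), B (Sum.inl i) (Sum.inr j)
      = if (i : ℕ) + (j : ℕ) + 2 = d / 2 + 1 then (-1 : F) ^ ((i : ℕ) + 1) else 0)
    (hBfe : ∀ i j : Fin (d / 2), B (Sum.inr i) (Sum.inl j)
      = if (j : ℕ) + (i : ℕ) + 2 = d / 2 + 1 then (-1 : F) ^ ((j : ℕ) + 1) else 0)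
    (X : Matrix (Fin (d / 2) ⊕ Fin (d / 2)) (Fin (d / 2) ⊕ Fin (d / 2)) F)
    (hXee : ∀ i j : Fin (d / 2), X (Sum.inl i) (Sum.inl j)
      = if (i : ℕ) + 1 = (j : ℕ) then 1 else 0)
    (hXff : ∀ i j : Fin (d / 2), X (Sum.inr i) (Sum.inr j)
      = if (i : ℕ) + 1 = (j : ℕ) then 1 else 0)
    (hXef : ∀ i j : Fin (d / 2), X (Sum.inl i) (Sum.inr j) = 0)
    (hXfe : ∀ i j : Fin (d / 2), X (Sum.inr i) (Sum.inl j) = 0) :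
    IsCompl (Submodule.span F (Set.range (sumVec F (d / 2))))
        (Submodule.span F (Set.range (diffVec F (d / 2)))) ∧
    (∀ v ∈ Submodule.span F (Set.range (sumVec F (d / 2))),
      ∀ w ∈ Submodule.span F (Set.range (diffVec F (d / 2))), v ⬝ᵥ B.mulVec w = 0) ∧
    (∀ v ∈ Submodule.span F (Set.range (sumVec F (d / 2))),
      X.mulVec v ∈ Submodule.span F (Set.range (sumVec F (d / 2)))) ∧
    (∀ v ∈ Submodule.span F (Set.range (diffVec F (d / 2))),
      X.mulVec v ∈ Submodule.span F (Set.range (diffVec F (d / 2)))) ∧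
    (∀ i j : Fin (d / 2), sumVec F (d / 2) i ⬝ᵥ B.mulVec (sumVec F (d / 2) j)
      = if (i : ℕ) + (j : ℕ) + 2 = d / 2 + 1 then 2 * (-1 : F) ^ ((i : ℕ) + 1) else 0) ∧
    (∀ i j : Fin (d / 2), diffVec F (d / 2) i ⬝ᵥ B.mulVec (diffVec F (d / 2) j)
      = if (i : ℕ) + (j : ℕ) + 2 = d / 2 + 1 then -(2 * (-1 : F) ^ ((i : ℕ) + 1)) else 0) ∧
    (∀ v ∈ Submodule.span F (Set.range (sumVec F (d / 2))),
      (∀ w ∈ Submodule.span F (Set.range (sumVec F (d / 2))), v ⬝ᵥ B.mulVec w = 0) → v = 0) ∧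
    (∀ v ∈ Submodule.span F (Set.range (diffVec F (d / 2))),
      (∀ w ∈ Submodule.span F (Set.range (diffVec F (d / 2))), v ⬝ᵥ B.mulVec w = 0) → v = 0) ∧
    Odd (d / 2) ∧
    (∀ k : Fin (d / 2), X.mulVec (sumVec F (d / 2) k)
      = if hk : (k : ℕ) = 0 then 0
        else sumVec F (d / 2) ⟨(k : ℕ) - 1, lt_of_le_of_lt (Nat.sub_le _ _) k.isLt⟩) ∧
    (∀ k : Fin (d / 2), X.mulVec (diffVec F (d / 2) k)
      = if hk : (k : ℕ) = 0 then 0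
        else diffVec F (d / 2) ⟨(k : ℕ) - 1, lt_of_le_of_lt (Nat.sub_le _ _) k.isLt⟩) :=
  split_into_two_odd_jordan_blocks_general p F d hd4 B hBee hBff hBef hBfe X hXee hXff hXef hXfe
end
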